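/- arXiv:2410.22804 — 13 statements merged into one kernel-verified Lean document; each statement's English description precedes it below -/
import Mathlib

section
/- Let 0 < s < 1 and let x ≥ y ≥ 0 with x ≠ 0. Then x^s − y^s ≤ 2(x − y)/(x^{1−s} + y^{1−s}). -/
/-!
With `a = x^s`, `b = y^s`, `A = x^(1-s)`, `B = y^(1-s)` we have `a A = x` and `b B = y`, hence
`2 (x - y) - (a - b) (A + B) = (a + b) (A - B)`, which is nonnegative because `t ↦ t^(1-s)` is
monotone for `s ≤ 1`.
-/

open Real

namespace Real

lemma rpow_mul_rpow_one_sub {x : ℝ} (hx : 0 ≤ x) (s : ℝ) : x ^ s * x ^ (1 - s) = x := by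
  rw [← rpow_add' hx (by norm_num), add_sub_cancel, rpow_one]

lemma two_mul_sub_sub_rpow_mul_eq {x y : ℝ} (hx : 0 ≤ x) (hy : 0 ≤ y) (s : ℝ) :
    2 * (x - y) - (x ^ s - y ^ s) * (x ^ (1 - s) + y ^ (1 - s)) =
      (x ^ s + y ^ s) * (x ^ (1 - s) - y ^ (1 - s)) := by
  linear_combination 2 * rpow_mul_rpow_one_sub hy s - 2 * rpow_mul_rpow_one_sub hx s

lemma rpow_sub_rpow_mul_le {s x y : ℝ} (hs1 : s ≤ 1) (hy : 0 ≤ y) (hxy : y ≤ x) :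
    (x ^ s - y ^ s) * (x ^ (1 - s) + y ^ (1 - s)) ≤ 2 * (x - y) := by
  have hx : 0 ≤ x := hy.trans hxy
  have hmono : y ^ (1 - s) ≤ x ^ (1 - s) := rpow_le_rpow hy hxy (by linarith)
  rw [← sub_nonneg, two_mul_sub_sub_rpow_mul_eq hx hy]
  exact mul_nonneg (by positivity) (sub_nonneg.mpr hmono)

end Real

theorem rpow_sub_rpow_le_general (s x y : ℝ) (hs1 : s < 1)
    (hy : 0 ≤ y) (hxy : y ≤ x) (hx : x ≠ 0) :
    x ^ s - y ^ s ≤ 2 * (x - y) / (x ^ (1 - s) + y ^ (1 - s)) := by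
  have hx0 : 0 < x := (hy.trans hxy).lt_of_ne' hx
  rw [le_div_iff₀ (by positivity)]
  exact rpow_sub_rpow_mul_le hs1.le hy hxy

/-- Lemma B.1 i): for `0 < s < 1` and `x ≥ y ≥ 0` with `x ≠ 0`,
`x^s − y^s ≤ 2(x − y)/(x^{1−s} + y^{1−s})`. -/
theorem rpow_sub_rpow_le (s x y : ℝ) (hs : 0 < s) (hs1 : s < 1)
    (hy : 0 ≤ y) (hxy : y ≤ x) (hx : x ≠ 0) :
    x ^ s - y ^ s ≤ 2 * (x - y) / (x ^ (1 - s) + y ^ (1 - s)) :=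
  rpow_sub_rpow_le_general s x y hs1 hy hxy hx
end

section
/- Let 0 < s < 1, K > 1, and let x ≥ y ≥ 0 with x ≠ 0 and x − y ≤ x/K. Then x^s − y^s ≤ (s/(K−1)^{1−s})·(x − y)^s. -/
open Real

/-- Lemma B.1 ii): for `0 < s < 1`, `K > 1`, `x ≥ y ≥ 0`, `x ≠ 0` and `x − y ≤ x/K`,
`x^s − y^s ≤ (s/(K−1)^{1−s})·(x − y)^s`. -/
theorem rpow_sub_rpow_le_of_close (s K x y : ℝ) (hs : 0 < s) (hs1 : s < 1) (hK : 1 < K)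
    (hy : 0 ≤ y) (hxy : y ≤ x) (hx : x ≠ 0) (hclose : x - y ≤ x / K) :
    x ^ s - y ^ s ≤ (s / (K - 1) ^ (1 - s)) * (x - y) ^ s := by
  rcases eq_or_lt_of_le hxy with rfl | hlt
  · simp only [sub_self, Real.zero_rpow hs.ne', mul_zero, sub_self, le_refl]
  set d := x - y with hd
  have hdpos : 0 < d := sub_pos.mpr hlt
  have hxpos : 0 < x := lt_of_le_of_lt hy hlt
  have hKd : (K - 1) * d ≤ y := by
    have : K * d ≤ x := by
      calc K * d ≤ K * (x / K) := by nlinarith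
        _ = x := by field_simp
    nlinarith
  have hypos : 0 < y := lt_of_lt_of_le (by nlinarith) hKd
  -- Bernoulli-type: (1 + d/y)^s ≤ 1 + s * (d/y)
  have hbern : (1 + d / y) ^ s ≤ 1 + s * (d / y) :=
    rpow_one_add_le_one_add_mul_self (by have := div_nonneg hdpos.le hypos.le; linarith) hs.le hs1.le
  have hstep : x ^ s ≤ y ^ s + s * y ^ (s - 1) * d := by
    have hxE : x = y * (1 + d / y) := by field_simp; linarith
    have : x ^ s = y ^ s * (1 + d / y) ^ s := by
      rw [hxE, Real.mul_rpow hy (by positivity)]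
    rw [this]
    have h2 : y ^ s * (1 + d / y) ^ s ≤ y ^ s * (1 + s * (d / y)) :=
      mul_le_mul_of_nonneg_left hbern (by positivity)
    refine h2.trans_eq ?_
    have : y ^ (s - 1) = y ^ s / y := by
      rw [Real.rpow_sub hypos, Real.rpow_one]
    rw [this]; field_simp
  have hmono : y ^ (s - 1) ≤ ((K - 1) * d) ^ (s - 1) :=
    Real.rpow_le_rpow_of_nonpos (by nlinarith) hKd (by linarith)
  have hrw : ((K - 1) * d) ^ (s - 1) = (K - 1) ^ (s - 1) * d ^ (s - 1) :=
    Real.mul_rpow (by linarith) hdpos.le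
  have hfin : s * ((K - 1) ^ (s - 1) * d ^ (s - 1)) * d = (s / (K - 1) ^ (1 - s)) * d ^ s := by
    rw [show (1 - s) = -(s - 1) by ring, Real.rpow_neg (by linarith), div_inv_eq_mul,
      show s = (s - 1) + 1 by ring, Real.rpow_add hdpos, Real.rpow_one]
    ring_nf
  calc x ^ s - y ^ s ≤ s * y ^ (s - 1) * d := by linarith
    _ ≤ s * ((K - 1) ^ (s - 1) * d ^ (s - 1)) * d := by
        rw [← hrw]
        exact mul_le_mul_of_nonneg_right (mul_le_mul_of_nonneg_left hmono hs.le) hdpos.le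
    _ = (s / (K - 1) ^ (1 - s)) * d ^ s := hfin
end

section
/- Let 0 < s < 1 and let x ≥ y ≥ 0 with x > 0. Then (x + y)^s ≤ (x/(x+y))^{1−s}·(x^s + y^s). -/
/-! Multiplying by `(x + y)^(1-s)` turns the claim into `x + y ≤ x^(1-s) (x^s + y^s)`, that is
`y ≤ x^(1-s) y^s`, which is `y^(1-s) ≤ x^(1-s)` for `y ≤ x` and `1 - s ≥ 0`. -/

open Real

lemma le_rpow_one_sub_mul_rpow {s x y : ℝ} (hy : 0 ≤ y) (hyx : y ≤ x) (hs : s ≤ 1) :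
    y ≤ x ^ (1 - s) * y ^ s :=
  calc y = y ^ (1 - s) * y ^ s := by rw [← rpow_add' hy (by norm_num), sub_add_cancel, rpow_one]
    _ ≤ x ^ (1 - s) * y ^ s := by gcongr

lemma add_le_rpow_one_sub_mul_add_rpow {s x y : ℝ} (hx : 0 < x) (hy : 0 ≤ y) (hyx : y ≤ x)
    (hs : s ≤ 1) : x + y ≤ x ^ (1 - s) * (x ^ s + y ^ s) := by
  have hx_eq : x ^ (1 - s) * x ^ s = x := by rw [← rpow_add hx, sub_add_cancel, rpow_one]
  linarith [le_rpow_one_sub_mul_rpow hy hyx hs]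

theorem add_rpow_le_general (s x y : ℝ) (hs1 : s < 1)
    (hy : 0 ≤ y) (hxy : y ≤ x) (hx : 0 < x) :
    (x + y) ^ s ≤ (x / (x + y)) ^ (1 - s) * (x ^ s + y ^ s) := by
  have hxy_pos : 0 < x + y := by linarith
  have hsplit : (x + y) ^ s * (x + y) ^ (1 - s) = x + y := by
    rw [← rpow_add hxy_pos, add_sub_cancel, rpow_one]
  rw [div_rpow hx.le hxy_pos.le, div_mul_eq_mul_div, le_div_iff₀ (rpow_pos_of_pos hxy_pos _), hsplit]
  exact add_le_rpow_one_sub_mul_add_rpow hx hy hxy hs1.le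

/-- Lemma B.1 iii): for `0 < s < 1` and `x ≥ y ≥ 0` with `x > 0`,
`(x + y)^s ≤ (x/(x+y))^{1−s}·(x^s + y^s)`. -/
theorem add_rpow_le (s x y : ℝ) (hs : 0 < s) (hs1 : s < 1)
    (hy : 0 ≤ y) (hxy : y ≤ x) (hx : 0 < x) :
    (x + y) ^ s ≤ (x / (x + y)) ^ (1 - s) * (x ^ s + y ^ s) :=
  add_rpow_le_general s x y hs1 hy hxy hx
end

section
/- Let 0 < s < 1 and K ≥ 1, and let x, y be reals with 0 < y ≤ x ≤ K·y. Then (x + y)^s ≤ (K/(1+K))^{1−s}·(x^s + y^s). -/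
/-!
With `c = K / (1 + K)`, both `x` and `y` are at most `c (x + y)`. Writing `z = z ^ s z ^ (1 - s)`
and bounding the second factor by `(c (x + y)) ^ (1 - s)` for `z = x, y`, the sum gives
`x + y ≤ c ^ (1 - s) (x + y) ^ (1 - s) (x ^ s + y ^ s)`; divide by `(x + y) ^ (1 - s)`.
-/

open Real

theorem le_rpow_mul_rpow_of_le {z M s : ℝ} (hz : 0 ≤ z) (hzM : z ≤ M) (hs : s ≤ 1) :
    z ≤ z ^ s * M ^ (1 - s) :=
  calc z = z ^ s * z ^ (1 - s) := by
        rw [← rpow_add' hz (by norm_num), add_sub_cancel, rpow_one]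
    _ ≤ z ^ s * M ^ (1 - s) := by gcongr

theorem add_rpow_le_rpow_mul_add_rpow {x y c s : ℝ} (hx : 0 ≤ x) (hy : 0 ≤ y) (hxy : 0 < x + y)
    (hxc : x ≤ c * (x + y)) (hyc : y ≤ c * (x + y)) (hs : s ≤ 1) :
    (x + y) ^ s ≤ c ^ (1 - s) * (x ^ s + y ^ s) := by
  have hc : 0 ≤ c := by nlinarith
  refine le_of_mul_le_mul_right ?_ (rpow_pos_of_pos hxy (1 - s))
  calc (x + y) ^ s * (x + y) ^ (1 - s) = x + y := by
        rw [← rpow_add hxy, add_sub_cancel, rpow_one]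
    _ ≤ x ^ s * (c * (x + y)) ^ (1 - s) + y ^ s * (c * (x + y)) ^ (1 - s) :=
        add_le_add (le_rpow_mul_rpow_of_le hx hxc hs) (le_rpow_mul_rpow_of_le hy hyc hs)
    _ = c ^ (1 - s) * (x ^ s + y ^ s) * (x + y) ^ (1 - s) := by
        rw [mul_rpow hc hxy.le]
        ring

theorem add_rpow_le_of_comparable_general (s K x y : ℝ) (hs1 : s < 1)
    (hy : 0 < y) (hyx : y ≤ x) (hxK : x ≤ K * y) :
    (x + y) ^ s ≤ (K / (1 + K)) ^ (1 - s) * (x ^ s + y ^ s) := by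
  have hK : 1 ≤ K := le_of_mul_le_mul_right (by linarith) hy
  have hK0 : 0 < 1 + K := by linarith
  refine add_rpow_le_rpow_mul_add_rpow (by linarith) hy.le (by linarith) ?_ ?_ hs1.le
  · rw [div_mul_eq_mul_div, le_div_iff₀ hK0]
    linarith
  · rw [div_mul_eq_mul_div, le_div_iff₀ hK0]
    nlinarith

/-- Second part of Lemma B.1 iii): for `0 < s < 1`, `K ≥ 1` and `0 < y ≤ x ≤ K·y`,
`(x + y)^s ≤ (K/(1+K))^{1−s}·(x^s + y^s)`. -/
theorem add_rpow_le_of_comparable (s K x y : ℝ) (hs : 0 < s) (hs1 : s < 1) (hK : 1 ≤ K)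
    (hy : 0 < y) (hyx : y ≤ x) (hxK : x ≤ K * y) :
    (x + y) ^ s ≤ (K / (1 + K)) ^ (1 - s) * (x ^ s + y ^ s) :=
  add_rpow_le_of_comparable_general s K x y hs1 hy hyx hxK
end

section
/- There exists a constant C ≥ 1 such that for all t ≥ 0, all k ∈ ℤ and all η ∈ ℝ one has 1 ≤ m(t,k,η) ≤ C. -/
open scoped Real

/-- `F(t,k,η) := ⨆_{j ∈ ℤ, j ≠ 0} 10/((1+(η/j − t)²)·⟨k−j⟩³)` with `⟨x⟩ := √(1+x²)`,
so `⟨k−j⟩³ = (1+(k−j)²)^{3/2}`. -/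
noncomputable def F (t : ℝ) (k : ℤ) (η : ℝ) : ℝ :=
  ⨆ j : {j : ℤ // j ≠ 0},
    10 / ((1 + (η / (j.1 : ℝ) - t) ^ 2) * (1 + ((k : ℝ) - (j.1 : ℝ)) ^ 2) ^ ((3 : ℝ) / 2))

/-- The Fourier weight `m(t,k,η) := exp(∫_0^t F(τ,k,η)·𝟙{√(k²+η²) ≤ 10τ²} dτ)`. -/
noncomputable def m (t : ℝ) (k : ℤ) (η : ℝ) : ℝ :=
  Real.exp (∫ τ in (0 : ℝ)..t,
    F τ k η * (if Real.sqrt ((k : ℝ) ^ 2 + η ^ 2) ≤ 10 * τ ^ 2 then 1 else 0))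

open MeasureTheory

lemma one_le_W (x : ℝ) : 1 ≤ (1 + x ^ 2) ^ ((3 : ℝ) / 2) := by
  have h := Real.rpow_le_rpow_of_exponent_le
    (by nlinarith [sq_nonneg x] : (1:ℝ) ≤ 1 + x ^ 2)
    (by norm_num : (0:ℝ) ≤ (3:ℝ)/2)
  simpa using h

lemma le_W (x : ℝ) : 1 + x ^ 2 ≤ (1 + x ^ 2) ^ ((3 : ℝ) / 2) := by
  have h := Real.rpow_le_rpow_of_exponent_le
    (by nlinarith [sq_nonneg x] : (1:ℝ) ≤ 1 + x ^ 2)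
    (by norm_num : (1:ℝ) ≤ (3:ℝ)/2)
  simpa using h

lemma summable_base : Summable (fun n : ℤ => 1 / ((1 + (n : ℝ) ^ 2) ^ ((3 : ℝ) / 2))) := by
  have hb : Summable (fun n : ℤ => 1 / (n : ℝ) ^ 2 + (if n = 0 then (1:ℝ) else 0)) := by
    refine ((Real.summable_one_div_int_pow).mpr (by norm_num)).add ?_
    exact summable_of_ne_finset_zero (s := {0}) (fun n hn => by
      simp only [Finset.mem_singleton] at hn; simp [hn])
  refine Summable.of_nonneg_of_le (fun n => by positivity) (fun n => ?_) hb
  by_cases hn : n = 0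
  · subst hn; simp
  · have h1 : ((n:ℝ)) ^ 2 ≤ (1 + (n:ℝ) ^ 2) ^ ((3:ℝ)/2) :=
      le_trans (by nlinarith [sq_nonneg (n:ℝ)]) (le_W (n:ℝ))
    have hn2 : (0:ℝ) < (n:ℝ) ^ 2 := by
      have : (n:ℝ) ≠ 0 := Int.cast_ne_zero.mpr hn
      positivity
    have := one_div_le_one_div_of_le hn2 h1
    simp only [hn, if_false, add_zero]
    linarith

lemma summable_shift (k : ℤ) :
    Summable (fun j : ℤ => 1 / ((1 + ((k : ℝ) - (j : ℝ)) ^ 2) ^ ((3 : ℝ) / 2))) := by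
  have h := (Equiv.summable_iff (Equiv.subLeft k)).mpr summable_base
  refine h.congr fun j => ?_
  simp only [Function.comp, Equiv.subLeft_apply]
  push_cast
  ring_nf

lemma tsum_shift (k : ℤ) :
    ∑' j : ℤ, 1 / ((1 + ((k : ℝ) - (j : ℝ)) ^ 2) ^ ((3 : ℝ) / 2))
      = ∑' n : ℤ, 1 / ((1 + (n : ℝ) ^ 2) ^ ((3 : ℝ) / 2)) := by
  rw [← (Equiv.subLeft k).tsum_eq (fun n : ℤ => 1 / ((1 + (n : ℝ) ^ 2) ^ ((3 : ℝ) / 2)))]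
  refine tsum_congr fun j => ?_
  simp only [Equiv.subLeft_apply]
  push_cast
  ring_nf

instance : Nonempty {j : ℤ // j ≠ 0} := ⟨⟨1, one_ne_zero⟩⟩

noncomputable def g (k : ℤ) (η : ℝ) (j : {j : ℤ // j ≠ 0}) (τ : ℝ) : ℝ :=
  10 / ((1 + (η / (j.1 : ℝ) - τ) ^ 2) * (1 + ((k : ℝ) - (j.1 : ℝ)) ^ 2) ^ ((3 : ℝ) / 2))

lemma g_nonneg (k : ℤ) (η : ℝ) (j : {j : ℤ // j ≠ 0}) (τ : ℝ) : 0 ≤ g k η j τ := by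
  unfold g
  have h1 := one_le_W ((k : ℝ) - (j.1 : ℝ))
  positivity

lemma g_le (k : ℤ) (η : ℝ) (j : {j : ℤ // j ≠ 0}) (τ : ℝ) :
    g k η j τ ≤ 10 * (1 / ((1 + ((k : ℝ) - (j.1 : ℝ)) ^ 2) ^ ((3 : ℝ) / 2))) := by
  unfold g
  set W := (1 + ((k : ℝ) - (j.1 : ℝ)) ^ 2) ^ ((3 : ℝ) / 2) with hW
  have h1 : (1:ℝ) ≤ W := one_le_W _
  have h2 : W ≤ (1 + (η / (j.1 : ℝ) - τ) ^ 2) * W := by nlinarith [sq_nonneg (η / (j.1 : ℝ) - τ)]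
  have := div_le_div_of_nonneg_left (by norm_num : (0:ℝ) ≤ 10) (by linarith : (0:ℝ) < W) h2
  rw [mul_one_div]
  exact this

lemma summable_g (k : ℤ) (η : ℝ) (τ : ℝ) : Summable (fun j : {j : ℤ // j ≠ 0} => g k η j τ) := by
  refine Summable.of_nonneg_of_le (fun j => g_nonneg k η j τ) (fun j => g_le k η j τ) ?_
  exact (((summable_shift k).mul_left 10).subtype _)

lemma F_le_tsum (τ : ℝ) (k : ℤ) (η : ℝ) : F τ k η ≤ ∑' j : {j : ℤ // j ≠ 0}, g k η j τ := by
  refine ciSup_le fun j => ?_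
  exact Summable.le_tsum (summable_g k η τ) j (fun j' _ => g_nonneg k η j' τ)

lemma F_nonneg (τ : ℝ) (k : ℤ) (η : ℝ) : 0 ≤ F τ k η := by
  refine Real.iSup_nonneg fun j => ?_
  have h1 := one_le_W ((k : ℝ) - (j.1 : ℝ))
  positivity

lemma g_eq (k : ℤ) (η : ℝ) (j : {j : ℤ // j ≠ 0}) :
    g k η j = fun τ => (10 / ((1 + ((k : ℝ) - (j.1 : ℝ)) ^ 2) ^ ((3 : ℝ) / 2)))
      * (1 + (τ - η / (j.1 : ℝ)) ^ 2)⁻¹ := by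
  funext τ
  unfold g
  have h1 : (0:ℝ) < (1 + ((k : ℝ) - (j.1 : ℝ)) ^ 2) ^ ((3 : ℝ) / 2) :=
    lt_of_lt_of_le one_pos (one_le_W _)
  have h2 : (0:ℝ) < 1 + (τ - η / (j.1 : ℝ)) ^ 2 := by positivity
  have h3 : (η / (j.1 : ℝ) - τ) ^ 2 = (τ - η / (j.1 : ℝ)) ^ 2 := by ring
  rw [h3]
  field_simp

lemma integrable_g (k : ℤ) (η : ℝ) (j : {j : ℤ // j ≠ 0}) : Integrable (g k η j) := by
  rw [g_eq]
  exact (integrable_inv_one_add_sq.comp_sub_right (η / (j.1 : ℝ))).const_mul _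

lemma integral_g (k : ℤ) (η : ℝ) (j : {j : ℤ // j ≠ 0}) :
    ∫ τ : ℝ, g k η j τ
      = (10 / ((1 + ((k : ℝ) - (j.1 : ℝ)) ^ 2) ^ ((3 : ℝ) / 2))) * π := by
  rw [g_eq]
  rw [MeasureTheory.integral_const_mul]
  congr 1
  have := MeasureTheory.integral_sub_right_eq_self (μ := volume)
    (fun x : ℝ => (1 + x ^ 2)⁻¹) (η / (j.1 : ℝ))
  rw [this, integral_univ_inv_one_add_sq]

lemma integral_bound (t : ℝ) (ht : 0 ≤ t) (k : ℤ) (η : ℝ) :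
    (∫ τ in (0 : ℝ)..t,
      F τ k η * (if Real.sqrt ((k : ℝ) ^ 2 + η ^ 2) ≤ 10 * τ ^ 2 then 1 else 0))
      ≤ 10 * π * ∑' n : ℤ, 1 / ((1 + (n : ℝ) ^ 2) ^ ((3 : ℝ) / 2)) := by
  set c := ∑' n : ℤ, 1 / ((1 + (n : ℝ) ^ 2) ^ ((3 : ℝ) / 2)) with hc
  have hc0 : 0 ≤ c := tsum_nonneg fun n => by positivity
  set f := fun τ : ℝ => F τ k η * (if Real.sqrt ((k : ℝ) ^ 2 + η ^ 2) ≤ 10 * τ ^ 2 then 1 else 0)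
    with hf
  have hf0 : ∀ τ, 0 ≤ f τ := by
    intro τ
    refine mul_nonneg (F_nonneg τ k η) ?_
    split_ifs <;> norm_num
  have hB0 : (0:ℝ) ≤ 10 * π * c := by positivity
  by_cases hInt : IntervalIntegrable f volume 0 t
  · rw [intervalIntegral.integral_of_le ht]
    have hmeas := hInt.1.aestronglyMeasurable
    rw [MeasureTheory.integral_eq_lintegral_of_nonneg_ae
      (Filter.Eventually.of_forall fun τ => hf0 τ) hmeas]
    refine ENNReal.toReal_le_of_le_ofReal hB0 ?_
    calc ∫⁻ τ in Set.Ioc (0:ℝ) t, ENNReal.ofReal (f τ)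
        ≤ ∫⁻ τ in Set.Ioc (0:ℝ) t, ∑' j : {j : ℤ // j ≠ 0}, ENNReal.ofReal (g k η j τ) := by
          refine MeasureTheory.lintegral_mono fun τ => ?_
          rw [← ENNReal.ofReal_tsum_of_nonneg (fun j => g_nonneg k η j τ) (summable_g k η τ)]
          refine ENNReal.ofReal_le_ofReal ?_
          calc f τ ≤ F τ k η * 1 := by
                refine mul_le_mul_of_nonneg_left ?_ (F_nonneg τ k η)
                split_ifs <;> norm_num
            _ = F τ k η := mul_one _
            _ ≤ _ := F_le_tsum τ k η
      _ = ∑' j : {j : ℤ // j ≠ 0}, ∫⁻ τ in Set.Ioc (0:ℝ) t, ENNReal.ofReal (g k η j τ) := by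
          refine MeasureTheory.lintegral_tsum fun j => ?_
          exact ((integrable_g k η j).aestronglyMeasurable.aemeasurable.ennreal_ofReal).restrict
      _ ≤ ∑' j : {j : ℤ // j ≠ 0}, ∫⁻ τ : ℝ, ENNReal.ofReal (g k η j τ) := by
          refine Summable.tsum_le_tsum (fun j => ?_) ENNReal.summable ENNReal.summable
          exact MeasureTheory.setLIntegral_le_lintegral _ _
      _ = ∑' j : {j : ℤ // j ≠ 0}, ENNReal.ofReal (∫ τ : ℝ, g k η j τ) := by
          refine tsum_congr fun j => ?_
          rw [MeasureTheory.ofReal_integral_eq_lintegral_ofReal (integrable_g k η j)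
            (Filter.Eventually.of_forall fun τ => g_nonneg k η j τ)]
      _ = ENNReal.ofReal (∑' j : {j : ℤ // j ≠ 0},
            (10 / ((1 + ((k : ℝ) - (j.1 : ℝ)) ^ 2) ^ ((3 : ℝ) / 2))) * π) := by
          simp_rw [integral_g]
          rw [ENNReal.ofReal_tsum_of_nonneg]
          · intro j
            have h1 : (0:ℝ) < (1 + ((k : ℝ) - (j.1 : ℝ)) ^ 2) ^ ((3 : ℝ) / 2) :=
              lt_of_lt_of_le one_pos (one_le_W _)
            positivity
          · refine Summable.of_nonneg_of_le (fun j => ?_) (fun j => le_of_eq ?_)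
              ((((summable_shift k).mul_left (10 * π)).subtype _))
            · have h1 : (0:ℝ) < (1 + ((k : ℝ) - (j.1 : ℝ)) ^ 2) ^ ((3 : ℝ) / 2) :=
                lt_of_lt_of_le one_pos (one_le_W _)
              positivity
            · simp only [Function.comp]
              ring
      _ ≤ ENNReal.ofReal (10 * π * c) := by
          refine ENNReal.ofReal_le_ofReal ?_
          have hsum2 : Summable (fun j : ℤ =>
              (10 / ((1 + ((k : ℝ) - (j : ℝ)) ^ 2) ^ ((3 : ℝ) / 2))) * π) := by
            refine ((summable_shift k).mul_left (10 * π)).congr fun j => ?_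
            ring
          calc (∑' j : {j : ℤ // j ≠ 0},
                (10 / ((1 + ((k : ℝ) - (j.1 : ℝ)) ^ 2) ^ ((3 : ℝ) / 2))) * π)
              ≤ ∑' j : ℤ, (10 / ((1 + ((k : ℝ) - (j : ℝ)) ^ 2) ^ ((3 : ℝ) / 2))) * π := by
                refine Summable.tsum_subtype_le
                  (fun j : ℤ => (10 / ((1 + ((k : ℝ) - (j : ℝ)) ^ 2) ^ ((3 : ℝ) / 2))) * π)
                  _ (fun j => ?_) hsum2
                have h1 : (0:ℝ) < (1 + ((k : ℝ) - (j : ℝ)) ^ 2) ^ ((3 : ℝ) / 2) :=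
                  lt_of_lt_of_le one_pos (one_le_W _)
                positivity
            _ = 10 * π * ∑' j : ℤ, 1 / ((1 + ((k : ℝ) - (j : ℝ)) ^ 2) ^ ((3 : ℝ) / 2)) := by
                rw [← tsum_mul_left]
                refine tsum_congr fun j => ?_
                ring
            _ = 10 * π * c := by rw [tsum_shift k]
  · rw [intervalIntegral.integral_undef hInt]
    exact hB0

/-- Lemma 4.4 i): the weight `m` is uniformly bounded above and below:
there is `C ≥ 1` with `1 ≤ m(t,k,η) ≤ C` for all `t ≥ 0`, `k ∈ ℤ`, `η ∈ ℝ`. -/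
theorem m_bounds : ∃ C : ℝ, 1 ≤ C ∧ ∀ t : ℝ, 0 ≤ t → ∀ k : ℤ, ∀ η : ℝ,
    1 ≤ m t k η ∧ m t k η ≤ C := by
  set c := ∑' n : ℤ, 1 / ((1 + (n : ℝ) ^ 2) ^ ((3 : ℝ) / 2)) with hc
  have hc0 : 0 ≤ c := tsum_nonneg fun n => by positivity
  refine ⟨Real.exp (10 * π * c), ?_, fun t ht k η => ⟨?_, ?_⟩⟩
  · rw [show (1:ℝ) = Real.exp 0 by simp]
    exact Real.exp_le_exp.mpr (by positivity)
  · rw [show (1:ℝ) = Real.exp 0 by simp]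
    unfold m
    refine Real.exp_le_exp.mpr ?_
    refine intervalIntegral.integral_nonneg ht fun τ _ => ?_
    refine mul_nonneg (F_nonneg τ k η) ?_
    split_ifs <;> norm_num
  · unfold m
    exact Real.exp_le_exp.mpr (integral_bound t ht k η)
end

section
/- There exists a constant C > 0 such that for all k ∈ ℤ with k ≠ 0, all l ∈ ℤ, all η, ξ ∈ ℝ and all t > 0 satisfying √(l²+ξ²) ≤ 10t², one has 1/(1 + |t − η/k|) ≤ C·√(F(t,l,ξ))·(1 + (k−l)² + (η−ξ)²)^{3/2}. -/
/-!
Take `j = k` in the supremum defining `F`: this gives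
`F(t,l,ξ) ≥ 10 / (⟨ξ/k − t⟩² ⟨l − k⟩³)`. Writing `ξ/k − t = −(t − η/k) + (ξ − η)/k`, Peetre's
inequality `⟨x + y⟩² ≤ 2 ⟨x⟩² ⟨y⟩²` and `|k| ≥ 1` bound `⟨ξ/k − t⟩²` by
`2 (1 + |t − η/k|)² (1 + (η − ξ)²)`, and what remains is monotonicity of `x ↦ x ^ (3/2)`;
the constant is `C = 1`.
-/

open Real

lemma le_F {j : ℤ} (hj : j ≠ 0) (t : ℝ) (l : ℤ) (ξ : ℝ) :
    10 / ((1 + (ξ / j - t) ^ 2) * (1 + ((l : ℝ) - j) ^ 2) ^ ((3 : ℝ) / 2)) ≤ F t l ξ := by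
  refine le_ciSup (f := fun j : {j : ℤ // j ≠ 0} =>
    10 / ((1 + (ξ / (j.1 : ℝ) - t) ^ 2) * (1 + ((l : ℝ) - j.1) ^ 2) ^ ((3 : ℝ) / 2)))
    ⟨10, ?_⟩ ⟨j, hj⟩
  rintro _ ⟨i, rfl⟩
  have h₁ : 1 ≤ (1 + ((l : ℝ) - i.1) ^ 2) ^ ((3 : ℝ) / 2) :=
    one_le_rpow (by nlinarith) (by norm_num)
  have h₂ : 1 ≤ (1 + (ξ / (i.1 : ℝ) - t) ^ 2) * (1 + ((l : ℝ) - i.1) ^ 2) ^ ((3 : ℝ) / 2) :=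
    one_le_mul_of_one_le_of_one_le (by nlinarith) h₁
  exact div_le_self (by norm_num) h₂

lemma one_add_sq_add_le (x y : ℝ) : 1 + (x + y) ^ 2 ≤ 2 * (1 + x ^ 2) * (1 + y ^ 2) := by
  nlinarith [sq_nonneg (x - y), sq_nonneg (x * y)]

lemma one_add_sq_div_sub_le {k : ℤ} (hk : k ≠ 0) (t η ξ : ℝ) :
    1 + (ξ / k - t) ^ 2 ≤ 2 * (1 + |t - η / k|) ^ 2 * (1 + (η - ξ) ^ 2) := by
  have hk₁ : (1 : ℝ) ≤ |(k : ℝ)| := by exact_mod_cast Int.one_le_abs hk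
  have hsplit : ξ / k - t = -(t - η / k) + (ξ - η) / k := by ring
  have hdiv : ((ξ - η) / k) ^ 2 ≤ (η - ξ) ^ 2 := by
    rw [← sq_abs, abs_div, ← sq_abs (η - ξ), abs_sub_comm η]
    gcongr
    exact div_le_self (abs_nonneg _) hk₁
  have hlorentz : 1 + (t - η / k) ^ 2 ≤ (1 + |t - η / k|) ^ 2 := by
    nlinarith [sq_abs (t - η / k), abs_nonneg (t - η / k)]
  calc 1 + (ξ / k - t) ^ 2
      ≤ 2 * (1 + (-(t - η / k)) ^ 2) * (1 + ((ξ - η) / k) ^ 2) := by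
        rw [hsplit]; exact one_add_sq_add_le _ _
    _ ≤ 2 * (1 + |t - η / k|) ^ 2 * (1 + (η - ξ) ^ 2) := by
        rw [neg_sq]; gcongr

lemma one_div_one_add_le_sqrt_mul {D A β R : ℝ} (hD : 0 ≤ D) (hAβ : 0 < A * β) (hR : 0 ≤ R)
    (h : A * β ≤ 10 * (1 + D) ^ 2 * R ^ 2) : 1 / (1 + D) ≤ √(10 / (A * β)) * R := by
  rw [← sqrt_sq hR, ← sqrt_mul (by positivity), le_sqrt (by positivity) (by positivity),
    div_pow, one_pow, div_mul_eq_mul_div, div_le_div_iff₀ (by positivity) hAβ]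
  linarith

/-- Lemma 4.4 ii): there is `C > 0` such that for `k ≠ 0`, `l ∈ ℤ`, `η, ξ ∈ ℝ` and `t > 0`
with `√(l²+ξ²) ≤ 10t²`,
`1/(1 + |t − η/k|) ≤ C·√(F(t,l,ξ))·(1 + (k−l)² + (η−ξ)²)^{3/2}`. -/
theorem lorentzian_le_sqrt_F : ∃ C : ℝ, 0 < C ∧
    ∀ k : ℤ, k ≠ 0 → ∀ l : ℤ, ∀ η ξ : ℝ, ∀ t : ℝ, 0 < t →
      Real.sqrt ((l : ℝ) ^ 2 + ξ ^ 2) ≤ 10 * t ^ 2 →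
      1 / (1 + |t - η / (k : ℝ)|) ≤
        C * Real.sqrt (F t l ξ) *
          (1 + ((k : ℝ) - (l : ℝ)) ^ 2 + (η - ξ) ^ 2) ^ ((3 : ℝ) / 2) := by
  refine ⟨1, one_pos, fun k hk l η ξ t _ _ => ?_⟩
  set Q := 1 + ((k : ℝ) - l) ^ 2 + (η - ξ) ^ 2
  set D := |t - η / k|
  have hQ : 1 ≤ Q := by linarith [sq_nonneg ((k : ℝ) - l), sq_nonneg (η - ξ)]
  have hQR : Q ≤ Q ^ ((3 : ℝ) / 2) := self_le_rpow_of_one_le hQ (by norm_num)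
  have hBR : (1 + ((l : ℝ) - k) ^ 2) ^ ((3 : ℝ) / 2) ≤ Q ^ ((3 : ℝ) / 2) :=
    rpow_le_rpow (by positivity) (by nlinarith [sq_nonneg (η - ξ)]) (by norm_num)
  have hA : 1 + (ξ / k - t) ^ 2 ≤ 2 * (1 + D) ^ 2 * Q :=
    (one_add_sq_div_sub_le hk t η ξ).trans (by gcongr; linarith [sq_nonneg ((k : ℝ) - l)])
  have hAβ : (1 + (ξ / k - t) ^ 2) * (1 + ((l : ℝ) - k) ^ 2) ^ ((3 : ℝ) / 2)
      ≤ 10 * (1 + D) ^ 2 * (Q ^ ((3 : ℝ) / 2)) ^ 2 :=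
    calc _ ≤ 2 * (1 + D) ^ 2 * Q ^ ((3 : ℝ) / 2) * Q ^ ((3 : ℝ) / 2) := by
          gcongr; exact hA.trans (by gcongr)
      _ ≤ 10 * (1 + D) ^ 2 * (Q ^ ((3 : ℝ) / 2)) ^ 2 := by
          rw [sq (Q ^ _), ← mul_assoc]; gcongr; norm_num
  rw [one_mul]
  exact (one_div_one_add_le_sqrt_mul (abs_nonneg _) (by positivity) (by positivity) hAβ).trans
    (by gcongr; exact le_F hk t l ξ)
end

section
/- There exists a constant C > 0 such that for all k ∈ ℤ with k ≠ 0, all l ∈ ℤ, all η, ξ ∈ ℝ and all t ≥ 0 satisfying √(k²+η²) ≤ 2·√(l²+ξ²), one has (√(k²+η²)/k²)·(1/(1+(t−η/k)²)) ≤ C·[ ((1+(η/k³)²)^{1/4}/(1+|t−η/k|))·(1 + √t·√(F(t,l,ξ)·𝟙{√(l²+ξ²) ≤ 10t²}))·(1+(k−l)²+(η−ξ)²)^{5/2} + 1/(1+t²) ]. -/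
lemma one_le_rpow' {x e : ℝ} (hx : 1 ≤ x) (he : 0 ≤ e) : 1 ≤ x ^ e := by
  calc (1:ℝ) = 1 ^ e := (Real.one_rpow e).symm
  _ ≤ x ^ e := Real.rpow_le_rpow zero_le_one hx he

lemma term_le_F (t : ℝ) (l : ℤ) (ξ : ℝ) (k : ℤ) (hk : k ≠ 0) :
    10 / ((1 + (ξ / (k : ℝ) - t) ^ 2) * (1 + ((l : ℝ) - (k : ℝ)) ^ 2) ^ ((3 : ℝ) / 2)) ≤ F t l ξ := by
  have hbdd : BddAbove (Set.range fun j : {j : ℤ // j ≠ 0} =>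
      10 / ((1 + (ξ / (j.1 : ℝ) - t) ^ 2) * (1 + ((l : ℝ) - (j.1 : ℝ)) ^ 2) ^ ((3 : ℝ) / 2))) := by
    refine ⟨10, ?_⟩
    rintro x ⟨j, rfl⟩
    have h1 : (1:ℝ) ≤ 1 + (ξ / (j.1 : ℝ) - t) ^ 2 := by linarith [sq_nonneg (ξ / (j.1 : ℝ) - t)]
    have h2 : (1:ℝ) ≤ (1 + ((l : ℝ) - (j.1 : ℝ)) ^ 2) ^ ((3 : ℝ) / 2) :=
      one_le_rpow' (by linarith [sq_nonneg ((l : ℝ) - (j.1 : ℝ))]) (by norm_num)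
    have h3 : (1:ℝ) ≤ (1 + (ξ / (j.1 : ℝ) - t) ^ 2) * (1 + ((l : ℝ) - (j.1 : ℝ)) ^ 2) ^ ((3 : ℝ) / 2) := by
      nlinarith
    exact div_le_self (by norm_num) h3
  exact le_ciSup hbdd ⟨k, hk⟩

lemma aux_den1 (u s e c : ℝ) (hu : u ^ 2 ≤ e ^ 2) :
    1 + (u - s) ^ 2 ≤ 2 * (1 + c ^ 2 + e ^ 2) * (1 + s ^ 2) := by
  nlinarith [sq_nonneg (u + s), sq_nonneg (e * s), sq_nonneg (c * s), sq_nonneg c,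
    sq_nonneg s, sq_nonneg (u * s)]

lemma aux_sq (x r Bv X S : ℝ) (hrr : x ^ 2 = r) (hr1 : 1 ≤ r) (hx : 0 ≤ x) (hBv : 1 ≤ Bv)
    (hM : 5 * r / 2 * X ≤ Bv ^ 2 * X ^ 2) (hDs : (1 + S) ^ 2 / 2 ≤ X) (hS0 : 0 ≤ S) :
    x * (1 + S) ≤ 50 * Bv * X := by
  have hX0 : (0:ℝ) ≤ X := by nlinarith [sq_nonneg (1 + S)]
  have hsq : (x * (1 + S)) ^ 2 ≤ (50 * Bv * X) ^ 2 := by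
    nlinarith [hM, hrr, mul_nonneg (by linarith : (0:ℝ) ≤ 5 * r / 2)
      (by linarith : (0:ℝ) ≤ X - (1 + S) ^ 2 / 2),
      mul_nonneg (by linarith : (0:ℝ) ≤ r) (sq_nonneg (1 + S))]
  have hy : (0:ℝ) ≤ 50 * Bv * X := by positivity
  nlinarith [hsq, mul_nonneg hx (by linarith : (0:ℝ) ≤ 1 + S)]

lemma aux_case1 (a P G S s2 sR : ℝ) (ha : a ≤ P * (1 + sR)) (hP : 1 ≤ P) (hG : 1 ≤ G)
    (hS : 0 ≤ S) (hs2 : s2 = S ^ 2) (hsR : sR ≤ 1 + 2 * S) :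
    a * (1 + S) ≤ 100 * (P * G) * (1 + s2) := by
  subst hs2
  nlinarith [mul_nonneg (mul_nonneg (by linarith : (0:ℝ) ≤ P) (by linarith : (0:ℝ) ≤ 1 + S))
      (by linarith : (0:ℝ) ≤ 1 + 2 * S - sR),
    mul_nonneg (by linarith : (0:ℝ) ≤ P) (sq_nonneg (1 - S)),
    mul_nonneg (mul_nonneg (by linarith : (0:ℝ) ≤ P) (by positivity : (0:ℝ) ≤ 1 + S ^ 2))
      (by linarith : (0:ℝ) ≤ G - 1),
    mul_le_mul_of_nonneg_right ha (by linarith : (0:ℝ) ≤ 1 + S)]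

lemma aux_case2b (a P Bv D S s2 x : ℝ) (ha : a ≤ P * (1 + x)) (hx1 : 1 ≤ x) (hP : 1 ≤ P)
    (hE : x * (1 + S) ≤ 50 * Bv * (D * (1 + s2))) (hS0 : 0 ≤ S) :
    a * (1 + S) ≤ 100 * (P * Bv * D) * (1 + s2) := by
  have h1 : a * (1 + S) ≤ P * (1 + x) * (1 + S) :=
    mul_le_mul_of_nonneg_right ha (by linarith)
  have h2 : P * (1 + x) * (1 + S) ≤ P * (2 * x) * (1 + S) := by
    nlinarith [mul_nonneg (mul_nonneg (by linarith : (0:ℝ) ≤ P) (by linarith : (0:ℝ) ≤ 1 + S))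
      (by linarith : (0:ℝ) ≤ x - 1)]
  have h3 : P * (2 * x) * (1 + S) ≤ 100 * (P * Bv * D) * (1 + s2) := by
    nlinarith [mul_nonneg (by linarith : (0:ℝ) ≤ P)
      (by linarith : (0:ℝ) ≤ 50 * Bv * (D * (1 + s2)) - x * (1 + S))]
  linarith

lemma aux_case2a1 (a G S s2 d : ℝ) (had : a ≤ 2 * d) (hdG : d ≤ G) (hd1 : 1 ≤ d)
    (hS0 : 0 ≤ S) (hs2 : s2 = S ^ 2) :
    a * (1 + S) ≤ 100 * G * (1 + s2) := by
  subst hs2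
  nlinarith [mul_nonneg (by linarith : (0:ℝ) ≤ d) (sq_nonneg (1 - S)),
    mul_nonneg (by positivity : (0:ℝ) ≤ 1 + S ^ 2) (by linarith : (0:ℝ) ≤ G - d),
    mul_nonneg (by linarith : (0:ℝ) ≤ d) (by positivity : (0:ℝ) ≤ 1 + S ^ 2),
    mul_le_mul_of_nonneg_right had (by linarith : (0:ℝ) ≤ 1 + S)]

lemma aux_case2a2 (a G S s2 : ℝ) (ha : a ≤ 4) (hG : 1 ≤ G) (hS0 : 0 ≤ S)
    (hs2 : s2 = S ^ 2) :
    a * (1 + S) ≤ 100 * G * (1 + s2) := by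
  subst hs2
  nlinarith [sq_nonneg (1 - S), mul_nonneg (by positivity : (0:ℝ) ≤ 1 + S ^ 2)
      (by linarith : (0:ℝ) ≤ G - 1),
    mul_le_mul_of_nonneg_right ha (by linarith : (0:ℝ) ≤ 1 + S)]

lemma aux_cs (a b c e : ℝ) : (a * c + b * e) ^ 2 ≤ (a ^ 2 + b ^ 2) * (c ^ 2 + e ^ 2) := by
  nlinarith [sq_nonneg (a * e - b * c)]

lemma aux_sum_sq (a b : ℝ) (ha : 0 ≤ a) (hb : 0 ≤ b) : a ^ 2 + b ^ 2 ≤ (a + b) ^ 2 := by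
  nlinarith [mul_nonneg ha hb]

lemma aux_K (P K : ℝ) (hP : 1 ≤ P) (hK : 1 ≤ K) : K ≤ P * K ^ 2 := by
  nlinarith [mul_nonneg (by linarith : (0:ℝ) ≤ P - 1) (sq_nonneg K),
    mul_nonneg (by linarith : (0:ℝ) ≤ K) (by linarith : (0:ℝ) ≤ K - 1)]

lemma aux_eta (P A sR K2 e : ℝ) (h1 : A ≤ P) (h2 : A * sR * K2 = e) (hsR : 0 ≤ sR)
    (hK2 : 0 ≤ K2) : e ≤ P * sR * K2 := by
  nlinarith [mul_nonneg (mul_nonneg (by linarith : (0:ℝ) ≤ P - A) hsR) hK2]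

set_option maxHeartbeats 1600000 in
/-- Lemma 4.4 iii): there is `C > 0` such that for `k ≠ 0`, `l ∈ ℤ`, `η, ξ ∈ ℝ`, `t ≥ 0`
with `√(k²+η²) ≤ 2√(l²+ξ²)`,
`(√(k²+η²)/k²)·(1/(1+(t−η/k)²))
  ≤ C·[((1+(η/k³)²)^{1/4}/(1+|t−η/k|))·(1 + √t·√(F(t,l,ξ)·𝟙{√(l²+ξ²) ≤ 10t²}))
        ·(1+(k−l)²+(η−ξ)²)^{5/2} + 1/(1+t²)]`. -/
theorem weight_frequency_estimate : ∃ C : ℝ, 0 < C ∧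
    ∀ k : ℤ, k ≠ 0 → ∀ l : ℤ, ∀ η ξ : ℝ, ∀ t : ℝ, 0 ≤ t →
      Real.sqrt ((k : ℝ) ^ 2 + η ^ 2) ≤ 2 * Real.sqrt ((l : ℝ) ^ 2 + ξ ^ 2) →
      (Real.sqrt ((k : ℝ) ^ 2 + η ^ 2) / (k : ℝ) ^ 2) * (1 / (1 + (t - η / (k : ℝ)) ^ 2)) ≤
        C * (((1 + (η / (k : ℝ) ^ 3) ^ 2) ^ ((1 : ℝ) / 4) / (1 + |t - η / (k : ℝ)|)) *
              (1 + Real.sqrt t *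
                Real.sqrt (F t l ξ *
                  (if Real.sqrt ((l : ℝ) ^ 2 + ξ ^ 2) ≤ 10 * t ^ 2 then 1 else 0))) *
              (1 + ((k : ℝ) - (l : ℝ)) ^ 2 + (η - ξ) ^ 2) ^ ((5 : ℝ) / 2)
            + 1 / (1 + t ^ 2)) := by
  refine ⟨100, by norm_num, ?_⟩
  intro k hk l η ξ t ht hfreq
  have hk0 : ((k:ℝ)) ≠ 0 := Int.cast_ne_zero.mpr hk
  set kr : ℝ := (k : ℝ) with hkrdef
  set K : ℝ := |kr| with hKdef
  have hK1 : (1:ℝ) ≤ K := by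
    have h := Int.one_le_abs hk
    rw [hKdef, hkrdef]
    calc (1:ℝ) = ((1:ℤ):ℝ) := by norm_num
    _ ≤ ((|k|:ℤ):ℝ) := by exact_mod_cast h
    _ = |(k:ℝ)| := by push_cast; ring
  have hK0 : (0:ℝ) < K := lt_of_lt_of_le one_pos hK1
  have hKne : K ≠ 0 := ne_of_gt hK0
  have hkr2 : kr ^ 2 = K ^ 2 := (sq_abs kr).symm
  have hkr2pos : (0:ℝ) < kr ^ 2 := by rw [hkr2]; exact pow_pos hK0 2
  set r : ℝ := η / kr with hrdef
  set s : ℝ := t - r with hsdef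
  set S : ℝ := |s| with hSdef
  have hS0 : (0:ℝ) ≤ S := abs_nonneg s
  have hs2S : s ^ 2 = S ^ 2 := (sq_abs s).symm
  set R : ℝ := |r| with hRdef
  have hR0 : (0:ℝ) ≤ R := abs_nonneg r
  have hRK : R = |η| / K := by rw [hRdef, hrdef, abs_div, hKdef]
  set P : ℝ := (1 + (η / kr ^ 3) ^ 2) ^ ((1:ℝ)/4) with hPdef
  set d : ℝ := 1 + (kr - (l:ℝ)) ^ 2 + (η - ξ) ^ 2 with hddef
  set D : ℝ := d ^ ((5:ℝ)/2) with hDdef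
  set Bv : ℝ := 1 + Real.sqrt t *
      Real.sqrt (F t l ξ * (if Real.sqrt ((l:ℝ) ^ 2 + ξ ^ 2) ≤ 10 * t ^ 2 then 1 else 0)) with hBvdef
  clear_value kr K r s S R P d D Bv
  have hs2pos : (0:ℝ) < 1 + s ^ 2 := by positivity
  have hP1 : (1:ℝ) ≤ P := by
    rw [hPdef]; exact one_le_rpow' (by linarith [sq_nonneg (η / kr ^ 3)]) (by norm_num)
  have hP0 : (0:ℝ) ≤ P := by linarith
  have hd1 : (1:ℝ) ≤ d := by
    rw [hddef]; linarith [sq_nonneg (kr - (l:ℝ)), sq_nonneg (η - ξ)]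
  have hd0 : (0:ℝ) < d := lt_of_lt_of_le one_pos hd1
  have hD1 : (1:ℝ) ≤ D := by rw [hDdef]; exact one_le_rpow' hd1 (by norm_num)
  have hD0 : (0:ℝ) < D := lt_of_lt_of_le one_pos hD1
  have hDne : D ≠ 0 := ne_of_gt hD0
  have hdD : d ≤ D := by
    rw [hDdef]
    calc d = d ^ (1:ℝ) := (Real.rpow_one d).symm
    _ ≤ d ^ ((5:ℝ)/2) := Real.rpow_le_rpow_of_exponent_le hd1 (by norm_num)
  have hB1 : (1:ℝ) ≤ Bv := by
    rw [hBvdef]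
    exact le_add_of_nonneg_right (by positivity)
  have hPB1 : (1:ℝ) ≤ P * Bv := by
    calc (1:ℝ) = 1 * 1 := by norm_num
    _ ≤ P * Bv := mul_le_mul hP1 hB1 zero_le_one hP0
  have hBD1 : (1:ℝ) ≤ Bv * D := by
    calc (1:ℝ) = 1 * 1 := by norm_num
    _ ≤ Bv * D := mul_le_mul hB1 hD1 zero_le_one (by linarith)
  have hPBD1 : (1:ℝ) ≤ P * Bv * D := by
    calc (1:ℝ) = 1 * 1 := by norm_num
    _ ≤ (P * Bv) * D := mul_le_mul hPB1 hD1 zero_le_one (by linarith)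
  have hsqub : Real.sqrt (kr ^ 2 + η ^ 2) ≤ K + |η| := by
    have heq : kr ^ 2 + η ^ 2 = K ^ 2 + |η| ^ 2 := by rw [← sq_abs η, hkr2]
    have h1 : kr ^ 2 + η ^ 2 ≤ (K + |η|) ^ 2 := by
      linarith [aux_sum_sq K |η| (by linarith) (abs_nonneg η)]
    calc Real.sqrt (kr ^ 2 + η ^ 2) ≤ Real.sqrt ((K + |η|) ^ 2) := Real.sqrt_le_sqrt h1
    _ = K + |η| := Real.sqrt_sq (by linarith [abs_nonneg η])
  have hK3 : (0:ℝ) ≤ |η| / K ^ 3 := div_nonneg (abs_nonneg η) (pow_nonneg hK0.le 3)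
  have hPs : Real.sqrt (|η| / K ^ 3) ≤ P := by
    have e1 : ((η / kr ^ 3) ^ 2) ^ ((1:ℝ)/4) ≤ P := by
      rw [hPdef]
      exact Real.rpow_le_rpow (sq_nonneg _) (by linarith [sq_nonneg (η / kr ^ 3)]) (by norm_num)
    have e2 : ((η / kr ^ 3) ^ 2) ^ ((1:ℝ)/4) = Real.sqrt (|η| / K ^ 3) := by
      have habs : (η / kr ^ 3) ^ 2 = (|η| / K ^ 3) ^ 2 := by
        rw [hKdef, ← abs_pow, ← abs_div, sq_abs]
      rw [habs, ← Real.rpow_natCast (|η| / K ^ 3) 2, ← Real.rpow_mul hK3,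
        Real.sqrt_eq_rpow]
      norm_num
    rw [← e2]; exact e1
  have hprod : Real.sqrt (|η| / K ^ 3) * Real.sqrt R = |η| / K ^ 2 := by
    rw [hRK, ← Real.sqrt_mul hK3]
    have h1 : |η| / K ^ 3 * (|η| / K) = (|η| / K ^ 2) ^ 2 := by field_simp
    rw [h1, Real.sqrt_sq (div_nonneg (abs_nonneg η) (pow_nonneg hK0.le 2))]
  have h_aP : Real.sqrt (kr ^ 2 + η ^ 2) / kr ^ 2 ≤ P * (1 + Real.sqrt R) := by
    rw [div_le_iff₀ hkr2pos]
    have h1 : K ≤ P * K ^ 2 := aux_K P K hP1 hK1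
    have hh : Real.sqrt (|η| / K ^ 3) * Real.sqrt R * K ^ 2 = |η| := by
      rw [hprod]; field_simp
    have h2 : |η| ≤ P * Real.sqrt R * K ^ 2 :=
      aux_eta P _ _ _ _ hPs hh (Real.sqrt_nonneg R) (sq_nonneg K)
    calc Real.sqrt (kr ^ 2 + η ^ 2) ≤ K + |η| := hsqub
    _ ≤ P * K ^ 2 + P * Real.sqrt R * K ^ 2 := by linarith
    _ = P * (1 + Real.sqrt R) * K ^ 2 := by ring
    _ = P * (1 + Real.sqrt R) * kr ^ 2 := by rw [hkr2]
  have h2s : (1 + S) ^ 2 ≤ 2 * (1 + s ^ 2) := by linarith [sq_nonneg (1 - S), hs2S]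
  have KEY : Real.sqrt (kr ^ 2 + η ^ 2) / kr ^ 2 * (1 + S) ≤ 100 * (P * Bv * D) * (1 + s ^ 2) := by
    by_cases hc : R ≤ 1 ∨ R ≤ 2 * S
    · have hsR : Real.sqrt R ≤ 1 + 2 * S := by
        have hone : R ≤ 1 → Real.sqrt R ≤ 1 + 2 * S := by
          intro h
          calc Real.sqrt R ≤ Real.sqrt 1 := Real.sqrt_le_sqrt h
          _ = 1 := Real.sqrt_one
          _ ≤ 1 + 2 * S := by linarith
        rcases hc with h | h
        · exact hone h
        · rcases le_or_gt R 1 with h1 | h1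
          · exact hone h1
          · have hRR : Real.sqrt R ≤ R := by
              calc Real.sqrt R ≤ Real.sqrt (R ^ 2) := by
                    apply Real.sqrt_le_sqrt
                    linarith [mul_nonneg hR0 (by linarith : (0:ℝ) ≤ R - 1)]
              _ = R := Real.sqrt_sq hR0
            linarith
      have := aux_case1 (Real.sqrt (kr ^ 2 + η ^ 2) / kr ^ 2) P (Bv * D) S (s ^ 2)
        (Real.sqrt R) h_aP hP1 hBD1 hS0 hs2S hsR
      linarith [this]
    · push_neg at hc
      obtain ⟨hR1, hRS⟩ := hc
      have hr_pos : (0:ℝ) < r := by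
        by_contra hrp
        push_neg at hrp
        have hRr : R = -r := by rw [hRdef]; exact abs_of_nonpos hrp
        have hts : t = r + s := by rw [hsdef]; ring
        linarith [neg_abs_le s, le_abs_self s]
      have hRr : R = r := by rw [hRdef]; exact abs_of_pos hr_pos
      have hts : t = r + s := by rw [hsdef]; ring
      have htr : r / 2 < t := by linarith [neg_abs_le s]
      have ht_half : 1/2 < t := by linarith
      have hr2t : r < 2 * t := by linarith [le_abs_self s]
      have hr1 : (1:ℝ) ≤ r := by linarith
      by_cases hχ : Real.sqrt ((l:ℝ) ^ 2 + ξ ^ 2) ≤ 10 * t ^ 2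
      · -- resonant case: use the F lower bound at j = k
        have hBv_eq : Bv = 1 + Real.sqrt t * Real.sqrt (F t l ξ) := by
          rw [hBvdef, if_pos hχ, mul_one]
        have hterm := term_le_F t l ξ k hk
        rw [← hkrdef] at hterm
        have hkr2' : (1:ℝ) ≤ kr ^ 2 := by
          rw [hkr2]
          calc (1:ℝ) = 1 * 1 := by norm_num
          _ ≤ K * K := mul_le_mul hK1 hK1 zero_le_one (by linarith)
          _ = K ^ 2 := (sq K).symm
        have hF' : 5 / ((1 + s ^ 2) * D) ≤ F t l ξ := by
          have hexp : ξ / kr - t = (ξ - η) / kr - s := by rw [hsdef, hrdef]; ring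
          have hu : ((ξ - η) / kr) ^ 2 ≤ (η - ξ) ^ 2 := by
            have h1 : ((ξ - η) / kr) ^ 2 ≤ (ξ - η) ^ 2 := by
              rw [div_pow]
              exact div_le_self (sq_nonneg _) hkr2'
            calc ((ξ - η) / kr) ^ 2 ≤ (ξ - η) ^ 2 := h1
            _ = (η - ξ) ^ 2 := by ring
          have hden1 : 1 + (ξ / kr - t) ^ 2 ≤ 2 * d * (1 + s ^ 2) := by
            rw [hexp, hddef]
            have := aux_den1 ((ξ - η) / kr) s (η - ξ) (kr - (l:ℝ)) hu
            linarith
          have hden2 : (1 + ((l:ℝ) - kr) ^ 2) ^ ((3:ℝ)/2) ≤ d ^ ((3:ℝ)/2) := by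
            apply Real.rpow_le_rpow (by positivity) ?_ (by norm_num)
            rw [hddef]; linarith [sq_nonneg (η - ξ)]
          have hdsplit : d * d ^ ((3:ℝ)/2) = D := by
            rw [hDdef, show (5:ℝ)/2 = 1 + 3/2 by norm_num, Real.rpow_add hd0, Real.rpow_one]
          have hdenle : (1 + (ξ / kr - t) ^ 2) * (1 + ((l:ℝ) - kr) ^ 2) ^ ((3:ℝ)/2)
              ≤ 2 * ((1 + s ^ 2) * D) := by
            calc (1 + (ξ / kr - t) ^ 2) * (1 + ((l:ℝ) - kr) ^ 2) ^ ((3:ℝ)/2)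
                ≤ (2 * d * (1 + s ^ 2)) * (d ^ ((3:ℝ)/2)) := by
                  apply mul_le_mul hden1 hden2 (by positivity)
                    (le_of_lt (mul_pos (mul_pos two_pos hd0) hs2pos))
            _ = 2 * ((1 + s ^ 2) * (d * d ^ ((3:ℝ)/2))) := by ring
            _ = 2 * ((1 + s ^ 2) * D) := by rw [hdsplit]
          have hstep10 : 5 / ((1 + s ^ 2) * D)
              ≤ 10 / ((1 + (ξ / kr - t) ^ 2) * (1 + ((l:ℝ) - kr) ^ 2) ^ ((3:ℝ)/2)) := by
            rw [div_le_div_iff₀ (mul_pos hs2pos hD0) (by positivity)]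
            linarith [hdenle]
          linarith [hstep10, hterm]
        have hfive : (0:ℝ) ≤ 5 / ((1 + s ^ 2) * D) :=
          div_nonneg (by norm_num) (le_of_lt (mul_pos hs2pos hD0))
        have hQ : Real.sqrt (r/2) * Real.sqrt (5 / ((1 + s ^ 2) * D)) ≤ Bv := by
          rw [hBv_eq]
          have h1 : Real.sqrt (r/2) ≤ Real.sqrt t := Real.sqrt_le_sqrt (by linarith)
          have h2 : Real.sqrt (5 / ((1 + s ^ 2) * D)) ≤ Real.sqrt (F t l ξ) :=
            Real.sqrt_le_sqrt hF'
          have h3 := mul_le_mul h1 h2 (Real.sqrt_nonneg _) (Real.sqrt_nonneg t)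
          linarith
        have hQ2 : (r/2) * (5 / ((1 + s ^ 2) * D)) ≤ Bv ^ 2 := by
          have h0 : (0:ℝ) ≤ Real.sqrt (r/2) * Real.sqrt (5 / ((1 + s ^ 2) * D)) := by positivity
          have e1 : Real.sqrt (r/2) ^ 2 = r/2 := Real.sq_sqrt (by linarith)
          have e2 : Real.sqrt (5 / ((1 + s ^ 2) * D)) ^ 2 = 5 / ((1 + s ^ 2) * D) :=
            Real.sq_sqrt hfive
          have e12 : Real.sqrt (r/2) ^ 2 * Real.sqrt (5 / ((1 + s ^ 2) * D)) ^ 2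
              = (r/2) * (5 / ((1 + s ^ 2) * D)) := by rw [e1, e2]
          linarith [mul_self_le_mul_self h0 hQ, e12]
        have hrr : (Real.sqrt r) ^ 2 = r := Real.sq_sqrt (by linarith)
        have hsr : (1:ℝ) ≤ Real.sqrt r := by
          rw [show (1:ℝ) = Real.sqrt 1 from Real.sqrt_one.symm]
          exact Real.sqrt_le_sqrt hr1
        have hs2ne : (1 + s ^ 2) ≠ 0 := ne_of_gt hs2pos
        have hfld : r/2 * (5 / ((1 + s ^ 2) * D)) * ((D * (1 + s ^ 2)) ^ 2)
            = 5 * r / 2 * (D * (1 + s ^ 2)) := by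
          field_simp
        have hM : 5 * r / 2 * (D * (1 + s ^ 2)) ≤ Bv ^ 2 * (D * (1 + s ^ 2)) ^ 2 := by
          calc 5 * r / 2 * (D * (1 + s ^ 2))
              = r/2 * (5 / ((1 + s ^ 2) * D)) * ((D * (1 + s ^ 2)) ^ 2) := hfld.symm
          _ ≤ Bv ^ 2 * (D * (1 + s ^ 2)) ^ 2 := mul_le_mul_of_nonneg_right hQ2 (sq_nonneg _)
        have hDs : (1 + S) ^ 2 / 2 ≤ D * (1 + s ^ 2) := by
          have k1 : (1 + S) ^ 2 / 2 ≤ 1 + s ^ 2 := by linarith [h2s]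
          have k2 : 1 + s ^ 2 ≤ D * (1 + s ^ 2) := le_mul_of_one_le_left (le_of_lt hs2pos) hD1
          linarith
        have hE : Real.sqrt r * (1 + S) ≤ 50 * Bv * (D * (1 + s ^ 2)) :=
          aux_sq (Real.sqrt r) r Bv (D * (1 + s ^ 2)) S hrr hr1 (Real.sqrt_nonneg r) hB1 hM hDs hS0
        have ha2 : Real.sqrt (kr ^ 2 + η ^ 2) / kr ^ 2 ≤ P * (1 + Real.sqrt r) := by
          have hRr2 : Real.sqrt R = Real.sqrt r := by rw [hRr]
          rw [← hRr2]; exact h_aP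
        exact aux_case2b _ P Bv D S (s ^ 2) (Real.sqrt r) ha2 hsr hP1 hE hS0
      · push_neg at hχ
        have hA0 : (0:ℝ) ≤ kr ^ 2 + η ^ 2 := by positivity
        have hB0 : (0:ℝ) ≤ (kr - (l:ℝ)) ^ 2 + (η - ξ) ^ 2 := by positivity
        set W := Real.sqrt ((kr - (l:ℝ)) ^ 2 + (η - ξ) ^ 2) with hWdef
        have hW0 : (0:ℝ) ≤ W := Real.sqrt_nonneg _
        have hW2 : W ^ 2 = (kr - (l:ℝ)) ^ 2 + (η - ξ) ^ 2 := Real.sq_sqrt hB0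
        have hCS : (kr * (kr - (l:ℝ)) + η * (η - ξ)) ^ 2
            ≤ (kr ^ 2 + η ^ 2) * ((kr - (l:ℝ)) ^ 2 + (η - ξ) ^ 2) :=
          aux_cs kr η (kr - (l:ℝ)) (η - ξ)
        have hABs : Real.sqrt (kr ^ 2 + η ^ 2) * W
            = Real.sqrt ((kr ^ 2 + η ^ 2) * ((kr - (l:ℝ)) ^ 2 + (η - ξ) ^ 2)) := by
          rw [hWdef, ← Real.sqrt_mul hA0]
        have hdot : -(kr * (kr - (l:ℝ)) + η * (η - ξ)) ≤ Real.sqrt (kr ^ 2 + η ^ 2) * W := by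
          rw [hABs]
          have h1 : |kr * (kr - (l:ℝ)) + η * (η - ξ)|
              ≤ Real.sqrt ((kr ^ 2 + η ^ 2) * ((kr - (l:ℝ)) ^ 2 + (η - ξ) ^ 2)) := by
            rw [← Real.sqrt_sq_eq_abs]
            exact Real.sqrt_le_sqrt hCS
          linarith [neg_abs_le (kr * (kr - (l:ℝ)) + η * (η - ξ))]
        have hsqA : (Real.sqrt (kr ^ 2 + η ^ 2)) ^ 2 = kr ^ 2 + η ^ 2 := Real.sq_sqrt hA0
        have htri : Real.sqrt ((l:ℝ) ^ 2 + ξ ^ 2) ≤ Real.sqrt (kr ^ 2 + η ^ 2) + W := by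
          have h' : (l:ℝ) ^ 2 + ξ ^ 2 ≤ (Real.sqrt (kr ^ 2 + η ^ 2) + W) ^ 2 := by
            linarith [hdot, hsqA, hW2]
          calc Real.sqrt ((l:ℝ) ^ 2 + ξ ^ 2)
              ≤ Real.sqrt ((Real.sqrt (kr ^ 2 + η ^ 2) + W) ^ 2) := Real.sqrt_le_sqrt h'
          _ = _ := Real.sqrt_sq (by positivity)
        have hetaK : |η| = K * R := by rw [hRK]; field_simp
        have hup : Real.sqrt (kr ^ 2 + η ^ 2) ≤ 4 * K * t := by
          have h1 : K + |η| ≤ 4 * K * t := by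
            rw [hetaK, hRr]
            linarith [mul_pos hK0 (by linarith : (0:ℝ) < 2 * t - r),
              mul_pos hK0 (by linarith : (0:ℝ) < 2 * t - 1)]
          linarith [hsqub]
        have h10 : 10 * t ^ 2 < 4 * K * t + W := by linarith [htri, hup, hχ]
        have hdWd : 1 + W ^ 2 ≤ d := by rw [hddef]; linarith [hW2]
        by_cases hWc : 5 * t ^ 2 ≤ W
        · have hd25 : 1 + 25 * t ^ 4 ≤ d := by
            linarith [hdWd, mul_nonneg (by linarith : (0:ℝ) ≤ W - 5 * t ^ 2)
              (by linarith [sq_nonneg t] : (0:ℝ) ≤ W + 5 * t ^ 2)]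
          have hat : Real.sqrt (kr ^ 2 + η ^ 2) / kr ^ 2 ≤ 4 * t := by
            rw [div_le_iff₀ hkr2pos]
            have e : t * kr ^ 2 = t * K ^ 2 := by rw [hkr2]
            linarith [hup, e, mul_nonneg ht (mul_nonneg hK0.le (by linarith : (0:ℝ) ≤ K - 1))]
          have ht4 : t / 8 ≤ t ^ 4 := by
            have hq : (0:ℝ) ≤ t ^ 2 + t/2 + 1/4 := by linarith [sq_nonneg (t + 1/4)]
            linarith [mul_nonneg (mul_nonneg (by linarith : (0:ℝ) ≤ t)
              (by linarith : (0:ℝ) ≤ t - 1/2)) hq]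
          have had : Real.sqrt (kr ^ 2 + η ^ 2) / kr ^ 2 ≤ 2 * d := by linarith
          have hDG : D ≤ P * Bv * D := by
            calc D = 1 * D := (one_mul D).symm
            _ ≤ (P * Bv) * D := mul_le_mul_of_nonneg_right hPB1 (by linarith)
          have := aux_case2a1 (Real.sqrt (kr ^ 2 + η ^ 2) / kr ^ 2) (P * Bv * D) S (s ^ 2) d
            had (by linarith) hd1 hS0 hs2S
          linarith
        · push_neg at hWc
          have hK5 : 5 * t < 4 * K := by
            by_contra hcon
            push_neg at hcon
            have h1 : (0:ℝ) ≤ t * (5 * t - 4 * K) := mul_nonneg ht (by linarith)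
            linarith [h10, hWc, h1]
          have ha4 : Real.sqrt (kr ^ 2 + η ^ 2) / kr ^ 2 ≤ 4 := by
            rw [div_le_iff₀ hkr2pos]
            linarith [hup, hkr2, mul_nonneg (by linarith : (0:ℝ) ≤ 4 * K - 5 * t) hK0.le]
          have := aux_case2a2 (Real.sqrt (kr ^ 2 + η ^ 2) / kr ^ 2) (P * Bv * D) S (s ^ 2)
            ha4 hPBD1 hS0 hs2S
          linarith
  have h1Sp : (0:ℝ) < 1 + S := by linarith
  have hstep : Real.sqrt (kr ^ 2 + η ^ 2) / kr ^ 2 * (1 / (1 + s ^ 2))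
      ≤ 100 * (P / (1 + S) * Bv * D) := by
    have e1 : Real.sqrt (kr ^ 2 + η ^ 2) / kr ^ 2 * (1 / (1 + s ^ 2))
        = (Real.sqrt (kr ^ 2 + η ^ 2) / kr ^ 2) / (1 + s ^ 2) := by ring
    have e2 : (100:ℝ) * (P / (1 + S) * Bv * D) = (100 * (P * Bv * D)) / (1 + S) := by ring
    rw [e1, e2, div_le_div_iff₀ hs2pos h1Sp]
    linarith [KEY]
  have hpos2 : (0:ℝ) ≤ 1 / (1 + t ^ 2) := by positivity
  calc Real.sqrt (kr ^ 2 + η ^ 2) / kr ^ 2 * (1 / (1 + s ^ 2))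
      ≤ 100 * (P / (1 + S) * Bv * D) := hstep
  _ ≤ 100 * (P / (1 + S) * Bv * D + 1 / (1 + t ^ 2)) := by linarith
end

section
/- There exists a constant C > 0 such that for all k, j ∈ ℤ with k ≠ 0 and j ≠ 0, all η ∈ ℝ and all t > 0 with t² > √(k²+η²), one has (1/(k²+η²)^{1/4})·1/((1+(η/j − t)²)·(1+(k−j)²)^{3/2}) ≤ C/|k|. -/
/-!
If `η / j` is at distance at least `t / 2` from `t`, the factor `1 + (η / j - t)²` alone exceeds
`t² / 4 > |(k, η)| / 4 ≥ |k| / 4`. Otherwise `η / j > t / 2`, so `t |j| / 2 < |η| ≤ |(k, η)| < t²`;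
this forces `|j| / 2 < t` and then `(|j| / 2)² < |(k, η)|`, i.e. `|j| / 2 < |(k, η)|^{1/2}`.
Together with `|k| ≤ |j| + |k - j| ≤ 2 |j| ⟨k - j⟩` this gives `|k| ≤ 4 |(k, η)|^{1/2} ⟨k - j⟩³`.
-/

open Real

lemma one_add_abs_le_two_mul_sqrt_one_add_sq (x : ℝ) : 1 + |x| ≤ 2 * √(1 + x ^ 2) := by
  have hsq : √(1 + x ^ 2) ^ 2 = 1 + x ^ 2 := sq_sqrt (by positivity)
  nlinarith [sq_abs x, abs_nonneg x, sq_nonneg (|x| - 1), sqrt_nonneg (1 + x ^ 2)]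

lemma abs_le_two_mul_abs_mul_sqrt_one_add_sq_sub {a b : ℝ} (hb : 1 ≤ |b|) :
    |a| ≤ 2 * |b| * √(1 + (a - b) ^ 2) := by
  have htri : |a| ≤ |b| + |a - b| := by simpa using abs_add_le b (a - b)
  have hsqrt := one_add_abs_le_two_mul_sqrt_one_add_sq (a - b)
  nlinarith [abs_nonneg (a - b)]

lemma sq_lt_of_mul_lt_of_lt_sq {a r t : ℝ} (ha : 0 ≤ a) (ht : 0 < t) (hlow : t * a < r)
    (hup : r < t ^ 2) : a ^ 2 < r := by
  have hat : a < t := by nlinarith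
  nlinarith

lemma Real.rpow_one_div_four_eq_sqrt_sqrt {x : ℝ} (hx : 0 ≤ x) : x ^ (1 / 4 : ℝ) = √(√x) := by
  rw [sqrt_eq_rpow, sqrt_eq_rpow, ← rpow_mul hx]
  norm_num

lemma abs_lt_four_mul_one_add_sq_of_half_le_abs_sub {k η s t : ℝ} (ht : 0 ≤ t)
    (hlt : √(k ^ 2 + η ^ 2) < t ^ 2) (hfar : t / 2 ≤ |s - t|) : |k| < 4 * (1 + (s - t) ^ 2) := by
  have hk : |k| ≤ √(k ^ 2 + η ^ 2) := by
    rw [← sqrt_sq_eq_abs]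
    exact sqrt_le_sqrt (by nlinarith [sq_nonneg η])
  have hsq : (t / 2) ^ 2 ≤ (s - t) ^ 2 := by
    rw [← sq_abs (s - t)]
    exact pow_le_pow_left₀ (by positivity) hfar 2
  linarith

lemma half_abs_lt_rpow_one_div_four_of_abs_div_sub_lt {k η j t : ℝ} (hj : j ≠ 0) (ht : 0 < t)
    (hlt : √(k ^ 2 + η ^ 2) < t ^ 2) (hclose : |η / j - t| < t / 2) :
    |j| / 2 < (k ^ 2 + η ^ 2) ^ (1 / 4 : ℝ) := by
  have hη : |η| ≤ √(k ^ 2 + η ^ 2) := by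
    rw [← sqrt_sq_eq_abs]
    exact sqrt_le_sqrt (by nlinarith [sq_nonneg k])
  have hdiv : t / 2 < |η| / |j| := by
    rw [← abs_div]
    linarith [(abs_lt.mp hclose).1, le_abs_self (η / j)]
  have hlow : t * (|j| / 2) < √(k ^ 2 + η ^ 2) := by
    have := (lt_div_iff₀ (abs_pos.mpr hj)).mp hdiv
    linarith
  have hsq := sq_lt_of_mul_lt_of_lt_sq (by positivity) ht hlow hlt
  rw [rpow_one_div_four_eq_sqrt_sqrt (by positivity)]
  exact lt_sqrt_of_sq_lt hsq

/-- Estimate (A.3): there is `C > 0` such that for `k, j ∈ ℤ∖{0}`, `η ∈ ℝ`, `t > 0` with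
`t² > √(k²+η²)`,
`(1/(k²+η²)^{1/4})·1/((1+(η/j − t)²)·(1+(k−j)²)^{3/2}) ≤ C/|k|`. -/
theorem M2_estimate : ∃ C : ℝ, 0 < C ∧
    ∀ k j : ℤ, k ≠ 0 → j ≠ 0 → ∀ η t : ℝ, 0 < t →
      Real.sqrt ((k : ℝ) ^ 2 + η ^ 2) < t ^ 2 →
      (1 / ((k : ℝ) ^ 2 + η ^ 2) ^ ((1 : ℝ) / 4)) *
        (1 / ((1 + (η / (j : ℝ) - t) ^ 2) * (1 + ((k : ℝ) - (j : ℝ)) ^ 2) ^ ((3 : ℝ) / 2)))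
      ≤ C / |(k : ℝ)| := by
  refine ⟨4, by norm_num, fun k j hk hj η t ht hlt => ?_⟩
  have hk1 : 1 ≤ |(k : ℝ)| := by exact_mod_cast Int.one_le_abs hk
  have hj1 : 1 ≤ |(j : ℝ)| := by exact_mod_cast Int.one_le_abs hj
  have hA : 1 ≤ (k : ℝ) ^ 2 + η ^ 2 := by nlinarith [sq_abs (k : ℝ), sq_nonneg η]
  have hD : 1 ≤ 1 + ((k : ℝ) - j) ^ 2 := le_add_of_nonneg_right (sq_nonneg _)
  have hP : 1 ≤ ((k : ℝ) ^ 2 + η ^ 2) ^ (1 / 4 : ℝ) := one_le_rpow hA (by norm_num)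
  have hB : 1 ≤ 1 + (η / j - t) ^ 2 := le_add_of_nonneg_right (sq_nonneg _)
  have hQ : 1 ≤ (1 + ((k : ℝ) - j) ^ 2) ^ (3 / 2 : ℝ) := one_le_rpow hD (by norm_num)
  rw [one_div_mul_one_div, div_le_div_iff₀ (by positivity) (by positivity), one_mul]
  rcases le_or_gt (t / 2) |η / j - t| with hfar | hclose
  · have hkB := abs_lt_four_mul_one_add_sq_of_half_le_abs_sub ht.le hlt hfar
    calc |(k : ℝ)| ≤ 4 * (1 * ((1 + (η / j - t) ^ 2) * 1)) := by linarith
      _ ≤ _ := by gcongr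
  · have hjP := half_abs_lt_rpow_one_div_four_of_abs_div_sub_lt
      (Int.cast_ne_zero.mpr hj) ht hlt hclose
    have hsqrtQ : √(1 + ((k : ℝ) - j) ^ 2) ≤ (1 + ((k : ℝ) - j) ^ 2) ^ (3 / 2 : ℝ) := by
      rw [sqrt_eq_rpow]
      exact rpow_le_rpow_of_exponent_le hD (by norm_num)
    calc |(k : ℝ)| ≤ 4 * (|(j : ℝ)| / 2) * √(1 + ((k : ℝ) - j) ^ 2) := by
          linarith [abs_le_two_mul_abs_mul_sqrt_one_add_sq_sub (a := (k : ℝ)) hj1]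
      _ ≤ 4 * (((k : ℝ) ^ 2 + η ^ 2) ^ (1 / 4 : ℝ) *
            (1 * (1 + ((k : ℝ) - j) ^ 2) ^ (3 / 2 : ℝ))) := by
          rw [one_mul, ← mul_assoc]; gcongr
      _ ≤ _ := by gcongr
end

section
/- Let k ∈ ℤ with k ≠ 0, η ∈ ℝ, and set D(t) := k² + (η − k t)². Let G, φ : ℝ → ℂ be differentiable and satisfy, for all t ∈ ℝ, G'(t) = (−D(t) + 2k(η−kt)/D(t) + k²/D(t))·G(t) + (i·k³/D(t)²)·φ(t) and φ'(t) = i·k·G(t) − (k²/D(t))·φ(t). Then for every t ∈ ℝ the derivative of t ↦ |G(t)|² + |φ(t)|² satisfies (d/dt)(|G(t)|² + |φ(t)|²) ≤ −(1/2)·D(t)·|G(t)|² − (k²/D(t))·|φ(t)|² + (10/(1+(t−η/k)²))·(|G(t)|² + |φ(t)|²). -/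
/-- The time-dependent symbol `D(t) = k² + (η − kt)²` of `-Δ_t` at frequency `(k,η)`. -/
noncomputable def D (k : ℤ) (η t : ℝ) : ℝ := (k : ℝ) ^ 2 + (η - (k : ℝ) * t) ^ 2

set_option maxHeartbeats 1000000 in
lemma hasDerivAt_abs_sq {f : ℝ → ℂ} {f' : ℂ} {t : ℝ} (hf : HasDerivAt f f' t) :
    HasDerivAt (fun τ => ‖f τ‖ ^ 2)
      (2 * ((starRingEnd ℂ) (f t) * f').re) t := by
  have hre : HasDerivAt (fun τ => (f τ).re) f'.re t :=
    (Complex.reCLM.hasFDerivAt.comp_hasDerivAt t hf)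
  have him : HasDerivAt (fun τ => (f τ).im) f'.im t :=
    (Complex.imCLM.hasFDerivAt.comp_hasDerivAt t hf)
  have h2 := (hre.mul hre).add (him.mul him)
  have hfun : (fun τ => ‖f τ‖ ^ 2)
      = fun τ => (f τ).re * (f τ).re + (f τ).im * (f τ).im := by
    funext τ
    rw [Complex.sq_norm, Complex.normSq_apply]
  rw [hfun]
  refine h2.congr_deriv ?_
  simp [Complex.mul_re]
  ring

set_option maxHeartbeats 1000000 in
lemma key_ineq (k s a b c d : ℝ) (hk2 : 1 ≤ k ^ 2) :
    2 * ((-(k^2+s^2) + 2*k*s/(k^2+s^2) + k^2/(k^2+s^2)) * (a^2+b^2)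
        + (k^3/(k^2+s^2)^2) * (b*c - a*d)
        + (k*(a*d - b*c) - (k^2/(k^2+s^2)) * (c^2+d^2)))
    ≤ -(1/2) * (k^2+s^2) * (a^2+b^2) - (k^2/(k^2+s^2)) * (c^2+d^2)
      + (10*k^2/(k^2+s^2)) * ((a^2+b^2) + (c^2+d^2)) := by
  have hDp : (0:ℝ) < k^2+s^2 := by nlinarith [sq_nonneg s]
  have hDp1 : (1:ℝ) ≤ k^2+s^2 := by nlinarith [sq_nonneg s]
  rw [← sub_nonneg]
  have h : (-(1/2) * (k^2+s^2) * (a^2+b^2) - (k^2/(k^2+s^2)) * (c^2+d^2)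
      + (10*k^2/(k^2+s^2)) * ((a^2+b^2) + (c^2+d^2)))
      - (2 * ((-(k^2+s^2) + 2*k*s/(k^2+s^2) + k^2/(k^2+s^2)) * (a^2+b^2)
        + (k^3/(k^2+s^2)^2) * (b*c - a*d)
        + (k*(a*d - b*c) - (k^2/(k^2+s^2)) * (c^2+d^2))))
      = ((3/2)*(k^2+s^2)^3*(a^2+b^2) + 8*k^2*(k^2+s^2)*(a^2+b^2)
          - 4*k*s*(k^2+s^2)*(a^2+b^2) + 11*k^2*(k^2+s^2)*(c^2+d^2)
          - 2*k*(k^2+s^2)^2*(a*d-b*c) + 2*k^3*(a*d-b*c)) / (k^2+s^2)^2 := by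
    field_simp
    ring
  rw [h]
  apply div_nonneg _ (by positivity)
  linarith [mul_nonneg (mul_nonneg hDp.le (add_nonneg (sq_nonneg a) (sq_nonneg b))) (sq_nonneg (s - 2*k)),
    mul_nonneg (mul_nonneg (sub_nonneg.2 hDp1) (sq_nonneg (k^2+s^2))) (add_nonneg (sq_nonneg a) (sq_nonneg b)),
    mul_nonneg hDp.le (sq_nonneg ((k^2+s^2)*a - 2*k*d)),
    mul_nonneg hDp.le (sq_nonneg ((k^2+s^2)*b + 2*k*c)),
    sq_nonneg (k^2*a + k*d), sq_nonneg (k^2*b - k*c),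
    mul_nonneg (mul_nonneg (sq_nonneg s) (sq_nonneg k)) (add_nonneg (sq_nonneg a) (sq_nonneg b)),
    mul_nonneg (mul_nonneg (sub_nonneg.2 hDp1) (sq_nonneg k)) (add_nonneg (sq_nonneg c) (sq_nonneg d)),
    mul_nonneg (mul_nonneg (sq_nonneg k) hDp.le) (add_nonneg (sq_nonneg a) (sq_nonneg b)),
    mul_nonneg (mul_nonneg (sq_nonneg k) hDp.le) (add_nonneg (sq_nonneg c) (sq_nonneg d))]

/-- Frequency-wise differential inequality (2.7) for the linearized viscous,
non-resistive MHD system in the good unknowns `(G, φ)` at frequency `(k, η)`,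
`k ≠ 0` (with `ν = α = 1`). -/
theorem linearized_energy_deriv_le (k : ℤ) (hk : k ≠ 0) (η : ℝ) (G φ : ℝ → ℂ)
    (hG : Differentiable ℝ G) (hφ : Differentiable ℝ φ)
    (hG' : ∀ t : ℝ, deriv G t =
      ((-D k η t + 2 * (k : ℝ) * (η - (k : ℝ) * t) / D k η t
          + (k : ℝ) ^ 2 / D k η t : ℝ) : ℂ) * G t
        + Complex.I * ((k : ℝ) ^ 3 / (D k η t) ^ 2 : ℝ) * φ t)
    (hφ' : ∀ t : ℝ, deriv φ t =
      Complex.I * ((k : ℝ) : ℂ) * G t - (((k : ℝ) ^ 2 / D k η t : ℝ) : ℂ) * φ t)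
    (t : ℝ) :
    deriv (fun τ => ‖G τ‖ ^ 2 + ‖φ τ‖ ^ 2) t ≤
      -(1 / 2) * D k η t * ‖G t‖ ^ 2
        - ((k : ℝ) ^ 2 / D k η t) * ‖φ t‖ ^ 2
        + (10 / (1 + (t - η / (k : ℝ)) ^ 2)) *
            (‖G t‖ ^ 2 + ‖φ t‖ ^ 2) := by
  have hk0 : ((k : ℝ)) ≠ 0 := Int.cast_ne_zero.mpr hk
  have hk2 : (1 : ℝ) ≤ (k : ℝ) ^ 2 := by
    have h1 : (1 : ℤ) ≤ k ^ 2 := by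
      rcases lt_or_gt_of_ne hk with h | h <;> nlinarith
    exact_mod_cast h1
  have h10 : 10 / (1 + (t - η / (k : ℝ)) ^ 2)
      = 10 * (k:ℝ)^2 / ((k:ℝ)^2 + (η - (k:ℝ)*t)^2) := by
    rw [div_eq_div_iff (by positivity) (by nlinarith [sq_nonneg (η - (k:ℝ)*t)])]
    field_simp
    ring
  have h1 := hasDerivAt_abs_sq (hG t).hasDerivAt
  have h2 := hasDerivAt_abs_sq (hφ t).hasDerivAt
  rw [show (fun τ => ‖G τ‖ ^ 2 + ‖φ τ‖ ^ 2) = ((fun τ => ‖G τ‖ ^ 2) + fun τ => ‖φ τ‖ ^ 2) from rfl]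
  rw [(h1.add h2).deriv, hG' t, hφ' t, h10]
  simp only [D, Complex.sq_norm, Complex.normSq_apply, Complex.mul_re, Complex.add_re,
    Complex.sub_re, Complex.mul_im, Complex.add_im, Complex.sub_im, Complex.I_re,
    Complex.I_im, Complex.ofReal_re, Complex.ofReal_im, Complex.conj_re, Complex.conj_im]
  have := key_ineq (k:ℝ) (η - (k:ℝ)*t) (G t).re (G t).im (φ t).re (φ t).im hk2
  linarith [this]
end

section
/- Let k ∈ ℤ with k ≠ 0, η ∈ ℝ, and set D(t) := k² + (η − k t)². Let G, φ : ℝ → ℂ be differentiable and satisfy, for all t ∈ ℝ, G'(t) = (−D(t) + 2k(η−kt)/D(t) + k²/D(t))·G(t) + (i·k³/D(t)²)·φ(t) and φ'(t) = i·k·G(t) − (k²/D(t))·φ(t). Then for every t ≥ 0, |G(t)|² + |φ(t)|² + ∫_0^t [ (1/2)·D(τ)·|G(τ)|² + (k²/D(τ))·|φ(τ)|² ] dτ ≤ e^{10π}·(|G(0)|² + |φ(0)|²). -/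
open scoped Real

lemma key_ineq_s12 (K s X Y W Dv : ℝ) (hK : 1 ≤ K^2) (hX : 0 ≤ X) (hY : 0 ≤ Y)
    (hW : W^2 ≤ X*Y) (hDv : Dv = K^2 + s^2) :
    2*((-Dv + 2*K*s/Dv + K^2/Dv)*X + (K - K^3/Dv^2)*W - (K^2/Dv)*Y)
      + ((1/2)*Dv*X + (K^2/Dv)*Y) ≤ (10*K^2/Dv)*(X+Y) := by
  have hD1 : 1 ≤ Dv := by nlinarith [sq_nonneg s]
  have hD0 : (0:ℝ) < Dv := by linarith
  have hDK : K^2 ≤ Dv := by nlinarith [sq_nonneg s]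
  have hc2 : (K - K^3/Dv^2)^2 ≤ K^2 := by
    have h1 : K^2/Dv^2 ≤ 1 := by
      rw [div_le_one (by positivity)]
      nlinarith
    have h0 : 0 ≤ K^2/Dv^2 := by positivity
    have he : K - K^3/Dv^2 = K * (1 - K^2/Dv^2) := by field_simp
    rw [he]
    calc (K*(1 - K^2/Dv^2))^2 = K^2 * (1 - K^2/Dv^2)^2 := by ring
    _ ≤ K^2 * 1 := by
        nlinarith [mul_nonneg (mul_nonneg (sq_nonneg K) h0) (by linarith : (0:ℝ) ≤ 2 - K^2/Dv^2)]
    _ = K^2 := by ring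
  have hu0 : 0 ≤ Dv * X := by positivity
  have hv0 : 0 ≤ (K^2/Dv) * Y := by positivity
  have huv : (Dv*X) * ((K^2/Dv)*Y) = K^2 * (X*Y) := by field_simp
  have hcw : (2*(K - K^3/Dv^2)*W)^2 ≤ (Dv*X + (K^2/Dv)*Y)^2 := by
    have h1 : (K - K^3/Dv^2)^2 * W^2 ≤ K^2 * (X*Y) := by
      nlinarith [sq_nonneg W, sq_nonneg (K - K^3/Dv^2)]
    nlinarith [sq_nonneg (Dv*X - (K^2/Dv)*Y)]
  have step1 : 2*(K - K^3/Dv^2)*W ≤ Dv*X + (K^2/Dv)*Y := by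
    have h1 : |2*(K - K^3/Dv^2)*W| ≤ |Dv*X + (K^2/Dv)*Y| := by
      have h2 := Real.sqrt_le_sqrt hcw
      rwa [Real.sqrt_sq_eq_abs, Real.sqrt_sq_eq_abs] at h2
    calc 2*(K - K^3/Dv^2)*W ≤ |2*(K - K^3/Dv^2)*W| := le_abs_self _
    _ ≤ |Dv*X + (K^2/Dv)*Y| := h1
    _ = Dv*X + (K^2/Dv)*Y := abs_of_nonneg (by linarith)
  have hcoef : 2*(-Dv + 2*K*s/Dv + K^2/Dv) + (3/2)*Dv ≤ 10*K^2/Dv := by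
    have e1 : 2*(-Dv + 2*K*s/Dv + K^2/Dv) + (3/2)*Dv = (-(1/2)*Dv^2 + 4*K*s + 2*K^2)/Dv := by
      field_simp; ring
    rw [e1, div_le_div_iff₀ hD0 hD0]
    nlinarith [sq_nonneg (K - s), sq_nonneg (Dv - 2)]
  have step2 : (2*(-Dv + 2*K*s/Dv + K^2/Dv) + (3/2)*Dv) * X ≤ (10*K^2/Dv) * X :=
    mul_le_mul_of_nonneg_right hcoef hX
  have h10 : 0 ≤ (10*K^2/Dv) * Y := by positivity
  nlinarith [step1, step2, h10]

/-- Frequency-wise content of Proposition 2.1 (linear stability): solutions of the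
Fourier-decoupled linearized MHD system at frequency `(k, η)`, `k ≠ 0`, are uniformly
bounded in time with time-integrated control of the dissipation terms. -/
theorem linearized_energy_estimate (k : ℤ) (hk : k ≠ 0) (η : ℝ) (G φ : ℝ → ℂ)
    (hG : Differentiable ℝ G) (hφ : Differentiable ℝ φ)
    (hG' : ∀ t : ℝ, deriv G t =
      ((-D k η t + 2 * (k : ℝ) * (η - (k : ℝ) * t) / D k η t
          + (k : ℝ) ^ 2 / D k η t : ℝ) : ℂ) * G t
        + Complex.I * ((k : ℝ) ^ 3 / (D k η t) ^ 2 : ℝ) * φ t)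
    (hφ' : ∀ t : ℝ, deriv φ t =
      Complex.I * ((k : ℝ) : ℂ) * G t - (((k : ℝ) ^ 2 / D k η t : ℝ) : ℂ) * φ t)
    (t : ℝ) (ht : 0 ≤ t) :
    ‖G t‖ ^ 2 + ‖φ t‖ ^ 2 +
      (∫ τ in (0 : ℝ)..t, ((1 / 2) * D k η τ * ‖G τ‖ ^ 2
        + ((k : ℝ) ^ 2 / D k η τ) * ‖φ τ‖ ^ 2)) ≤
      Real.exp (10 * π) * (‖G 0‖ ^ 2 + ‖φ 0‖ ^ 2) := by
  have hK2 : 1 ≤ ((k:ℝ))^2 := by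
    have h1 : (1:ℤ) ≤ k^2 := by
      rcases lt_or_gt_of_ne hk with h | h
      · nlinarith
      · nlinarith
    exact_mod_cast h1
  have hD0 : ∀ τ : ℝ, 0 < D k η τ := fun τ => by
    have := sq_nonneg (η - (k:ℝ)*τ); unfold D; nlinarith
  have hDcont : Continuous (D k η) := by unfold D; continuity
  -- notation
  set E : ℝ → ℝ := fun τ => ‖G τ‖^2 + ‖φ τ‖^2 with hEdef
  set dd : ℝ → ℝ := fun τ => (1/2)*D k η τ*‖G τ‖^2
      + ((k:ℝ)^2/D k η τ)*‖φ τ‖^2 with hdddef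
  set cc : ℝ → ℝ := fun τ => 10*(k:ℝ)^2/D k η τ with hccdef
  have hEabs : ∀ τ, E τ = ((G τ).re^2 + (G τ).im^2) + ((φ τ).re^2 + (φ τ).im^2) := by
    intro τ
    simp only [hEdef, Complex.sq_norm, Complex.normSq_apply]
    ring
  have hddabs : ∀ τ, dd τ = (1/2)*D k η τ*((G τ).re^2 + (G τ).im^2)
      + ((k:ℝ)^2/D k η τ)*((φ τ).re^2 + (φ τ).im^2) := by
    intro τ
    simp only [hdddef, Complex.sq_norm, Complex.normSq_apply]
    ring
  -- derivative of E
  have hEd : ∀ τ, HasDerivAt E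
      (2*((G τ).re*(deriv G τ).re + (G τ).im*(deriv G τ).im)
        + 2*((φ τ).re*(deriv φ τ).re + (φ τ).im*(deriv φ τ).im)) τ := by
    intro τ
    have hare : HasDerivAt (fun x => (G x).re) ((deriv G τ).re) τ :=
      Complex.reCLM.hasFDerivAt.comp_hasDerivAt τ (hG τ).hasDerivAt
    have haim : HasDerivAt (fun x => (G x).im) ((deriv G τ).im) τ :=
      Complex.imCLM.hasFDerivAt.comp_hasDerivAt τ (hG τ).hasDerivAt
    have hpre : HasDerivAt (fun x => (φ x).re) ((deriv φ τ).re) τ :=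
      Complex.reCLM.hasFDerivAt.comp_hasDerivAt τ (hφ τ).hasDerivAt
    have hpim : HasDerivAt (fun x => (φ x).im) ((deriv φ τ).im) τ :=
      Complex.imCLM.hasFDerivAt.comp_hasDerivAt τ (hφ τ).hasDerivAt
    have h := ((hare.fun_pow 2).fun_add (haim.fun_pow 2)).fun_add ((hpre.fun_pow 2).fun_add (hpim.fun_pow 2))
    have hfun : E = fun x => ((G x).re^2 + (G x).im^2) + ((φ x).re^2 + (φ x).im^2) :=
      funext hEabs
    rw [hfun]
    exact h.congr_deriv (by push_cast; ring)
  -- pointwise energy inequality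
  have keypt : ∀ τ, (2*((G τ).re*(deriv G τ).re + (G τ).im*(deriv G τ).im)
        + 2*((φ τ).re*(deriv φ τ).re + (φ τ).im*(deriv φ τ).im)) + dd τ ≤ cc τ * E τ := by
    intro τ
    have hgre : (deriv G τ).re = (-D k η τ + 2*(k:ℝ)*(η - (k:ℝ)*τ)/D k η τ
          + (k:ℝ)^2/D k η τ) * (G τ).re - ((k:ℝ)^3/(D k η τ)^2) * (φ τ).im := by
      rw [hG' τ]
      simp only [Complex.add_re, Complex.mul_re, Complex.mul_im, Complex.I_re, Complex.I_im,
        Complex.ofReal_re, Complex.ofReal_im]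
      ring
    have hgim : (deriv G τ).im = (-D k η τ + 2*(k:ℝ)*(η - (k:ℝ)*τ)/D k η τ
          + (k:ℝ)^2/D k η τ) * (G τ).im + ((k:ℝ)^3/(D k η τ)^2) * (φ τ).re := by
      rw [hG' τ]
      simp only [Complex.add_re, Complex.add_im, Complex.mul_re, Complex.mul_im, Complex.I_re,
        Complex.I_im, Complex.ofReal_re, Complex.ofReal_im]
      ring
    have hpre : (deriv φ τ).re = -(k:ℝ)*(G τ).im - ((k:ℝ)^2/D k η τ)*(φ τ).re := by
      rw [hφ' τ]
      simp only [Complex.sub_re, Complex.mul_re, Complex.mul_im, Complex.I_re, Complex.I_im,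
        Complex.ofReal_re, Complex.ofReal_im]
      ring
    have hpim : (deriv φ τ).im = (k:ℝ)*(G τ).re - ((k:ℝ)^2/D k η τ)*(φ τ).im := by
      rw [hφ' τ]
      simp only [Complex.sub_re, Complex.sub_im, Complex.mul_re, Complex.mul_im, Complex.I_re,
        Complex.I_im, Complex.ofReal_re, Complex.ofReal_im]
      ring
    have hW : ((G τ).re*(φ τ).im - (G τ).im*(φ τ).re)^2
        ≤ ((G τ).re^2 + (G τ).im^2) * ((φ τ).re^2 + (φ τ).im^2) := by
      nlinarith [sq_nonneg ((G τ).re*(φ τ).re + (G τ).im*(φ τ).im)]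
    have hk1 := key_ineq_s12 ((k:ℝ)) (η - (k:ℝ)*τ) ((G τ).re^2 + (G τ).im^2)
      ((φ τ).re^2 + (φ τ).im^2) ((G τ).re*(φ τ).im - (G τ).im*(φ τ).re) (D k η τ)
      hK2 (by positivity) (by positivity) hW rfl
    rw [hgre, hgim, hpre, hpim, hddabs τ, hEabs τ, hccdef]
    nlinarith [hk1]

  -- continuity of the coefficients
  have hk0 : (k:ℝ) ≠ 0 := Int.cast_ne_zero.mpr hk
  have hDne : ∀ τ : ℝ, D k η τ ≠ 0 := fun τ => (hD0 τ).ne'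
  have hddcont : Continuous dd := by
    rw [hdddef]
    apply Continuous.add
    · exact (continuous_const.mul hDcont).mul
        ((continuous_norm.comp hG.continuous).pow 2)
    · exact ((continuous_const.div hDcont hDne)).mul
        ((continuous_norm.comp hφ.continuous).pow 2)
  have hcccont : Continuous cc := continuous_const.div hDcont hDne
  set J : ℝ → ℝ := fun τ => ∫ σ in (0:ℝ)..τ, dd σ with hJdef
  set I : ℝ → ℝ := fun τ => ∫ σ in (0:ℝ)..τ, cc σ with hIdef
  have hJd : ∀ τ, HasDerivAt J (dd τ) τ := fun τ =>
    intervalIntegral.integral_hasDerivAt_right (hddcont.intervalIntegrable _ _)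
      (hddcont.stronglyMeasurable.stronglyMeasurableAtFilter) hddcont.continuousAt
  have hId : ∀ τ, HasDerivAt I (cc τ) τ := fun τ =>
    intervalIntegral.integral_hasDerivAt_right (hcccont.intervalIntegrable _ _)
      (hcccont.stronglyMeasurable.stronglyMeasurableAtFilter) hcccont.continuousAt
  set Φ : ℝ → ℝ := fun τ => (E τ + J τ) * Real.exp (-(I τ)) with hPdef
  have hPd : ∀ τ, HasDerivAt Φ
      (((2*((G τ).re*(deriv G τ).re + (G τ).im*(deriv G τ).im)
        + 2*((φ τ).re*(deriv φ τ).re + (φ τ).im*(deriv φ τ).im)) + dd τ)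
          * Real.exp (-(I τ))
        + (E τ + J τ) * (Real.exp (-(I τ)) * (-(cc τ)))) τ := fun τ =>
    ((hEd τ).add (hJd τ)).mul ((hId τ).neg.exp)
  have hE0 : ∀ τ, 0 ≤ E τ := fun τ => by rw [hEdef]; positivity
  have hdd0 : ∀ τ, 0 ≤ dd τ := fun τ => by
    rw [hdddef]
    have h1 := (hD0 τ).le
    have h2 : 0 ≤ (k:ℝ)^2/D k η τ := by positivity
    positivity
  have hcc0 : ∀ τ, 0 ≤ cc τ := fun τ => by
    rw [hccdef]
    have := (hD0 τ).le
    positivity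
  have hanti : AntitoneOn Φ (Set.Ici 0) := by
    apply antitoneOn_of_deriv_nonpos (convex_Ici 0)
    · exact (Continuous.continuousOn (by
        exact continuous_iff_continuousAt.mpr fun τ => (hPd τ).continuousAt))
    · intro x hx
      exact (hPd x).differentiableAt.differentiableWithinAt
    · intro x hx
      rw [interior_Ici] at hx
      rw [(hPd x).deriv]
      have hJx : 0 ≤ J x :=
        intervalIntegral.integral_nonneg hx.le (fun u _ => hdd0 u)
      have hkey := keypt x
      have hexp : 0 ≤ Real.exp (-(I x)) := (Real.exp_pos _).le
      have h1 : 0 ≤ cc x * E x + cc x * J x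
          - ((2*((G x).re*(deriv G x).re + (G x).im*(deriv G x).im)
            + 2*((φ x).re*(deriv φ x).re + (φ x).im*(deriv φ x).im)) + dd x) := by
        have := mul_nonneg (hcc0 x) hJx
        linarith
      nlinarith [mul_nonneg hexp h1]
  have hPt : Φ t ≤ Φ 0 := hanti (Set.self_mem_Ici) (Set.mem_Ici.mpr ht) ht
  have hP0 : Φ 0 = E 0 := by
    simp [hPdef, hJdef, hIdef]
  -- bound on the integral of cc
  have hIle : I t ≤ 10*π := by
    have hccform : ∀ τ : ℝ, cc τ = 10 * (1/(1 + (τ - η/(k:ℝ))^2)) := by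
      intro τ
      have hden : ((k:ℝ)^2 + (η - (k:ℝ)*τ)^2) ≠ 0 := hDne τ
      show 10*(k:ℝ)^2 / ((k:ℝ)^2 + (η - (k:ℝ)*τ)^2) = 10 * (1/(1 + (τ - η/(k:ℝ))^2))
      rw [mul_one_div, div_eq_div_iff hden (by positivity : (0:ℝ) < 1 + (τ - η/(k:ℝ))^2).ne']
      field_simp
      ring
    have harct : I t = 10 * (Real.arctan (t - η/(k:ℝ)) - Real.arctan (0 - η/(k:ℝ))) := by
      rw [hIdef]
      show (∫ σ in (0:ℝ)..t, cc σ) = _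
      rw [intervalIntegral.integral_congr (g := fun τ => 10 * (1/(1 + (τ - η/(k:ℝ))^2)))
        (fun τ _ => hccform τ)]
      rw [intervalIntegral.integral_const_mul]
      rw [intervalIntegral.integral_comp_sub_right (fun u => 1/(1+u^2)) (η/(k:ℝ)),
        integral_one_div_one_add_sq]
    rw [harct]
    have h1 := Real.arctan_lt_pi_div_two (t - η/(k:ℝ))
    have h2 := Real.neg_pi_div_two_lt_arctan (0 - η/(k:ℝ))
    nlinarith
  -- conclusion
  have hfinal : E t + J t ≤ Real.exp (10*π) * E 0 := by
    have h1 : (E t + J t) * Real.exp (-(I t)) ≤ E 0 := by rw [← hP0]; exact hPt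
    have h2 := mul_le_mul_of_nonneg_right h1 (Real.exp_pos (I t)).le
    rw [mul_assoc, ← Real.exp_add, neg_add_cancel, Real.exp_zero, mul_one] at h2
    calc E t + J t ≤ E 0 * Real.exp (I t) := h2
    _ ≤ E 0 * Real.exp (10*π) := by
        exact mul_le_mul_of_nonneg_left (Real.exp_le_exp.mpr hIle) (hE0 0)
    _ = Real.exp (10*π) * E 0 := by ring
  exact hfinal
end

section
/- For every k ∈ ℤ with |k| ≥ 1 and every u ∈ ℝ, setting D := k² + u², one has |k·u|/D + ((1 + u²/k²)/8)·(1 − (k²/D)²) ≤ D/2 + 5·k²/D. -/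
/-!
With `K = k² ≥ 1` and `D = K + u²`, the cross term `|k u| / D` is at most `1/2` by AM-GM, and
the weight term equals `(u² / (8K)) (1 + K / D) ≤ u² / 4`. Both are already absorbed by
`D / 2 ≥ 1/2 + u²/2`.
-/

lemma abs_mul_div_sq_add_sq_le_half (a b : ℝ) : |a * b| / (a ^ 2 + b ^ 2) ≤ 1 / 2 :=
  div_le_of_le_mul₀ (by positivity) (by norm_num) <| by
    rw [abs_mul]
    nlinarith [two_mul_le_add_sq |a| |b|, sq_abs a, sq_abs b]

lemma one_add_div_mul_one_sub_div_sq {K : ℝ} (hK : 0 < K) (u : ℝ) :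
    (1 + u ^ 2 / K) * (1 - (K / (K + u ^ 2)) ^ 2) = u ^ 2 / K * (1 + K / (K + u ^ 2)) := by
  have hD : 0 < K + u ^ 2 := by positivity
  field_simp
  ring

lemma one_add_div_mul_one_sub_div_sq_le {K : ℝ} (hK : 0 < K) (u : ℝ) :
    (1 + u ^ 2 / K) * (1 - (K / (K + u ^ 2)) ^ 2) ≤ u ^ 2 / K * 2 := by
  rw [one_add_div_mul_one_sub_div_sq hK]
  have hKD : K / (K + u ^ 2) ≤ 1 :=
    div_le_one_of_le₀ (le_add_of_nonneg_right (sq_nonneg u)) (by positivity)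
  gcongr
  linarith

/-- Key algebraic multiplier inequality from the proof of Proposition 2.1 (with
`u = η − kt` and `D = k² + u²`): the non-dissipative linear error terms are absorbed by
half the viscous dissipation plus the logarithmic derivative of the weight `m_L`. -/
theorem multiplier_absorption (k : ℤ) (hk : 1 ≤ |k|) (u : ℝ) :
    |(k : ℝ) * u| / ((k : ℝ) ^ 2 + u ^ 2)
      + ((1 + u ^ 2 / (k : ℝ) ^ 2) / 8) * (1 - ((k : ℝ) ^ 2 / ((k : ℝ) ^ 2 + u ^ 2)) ^ 2)
    ≤ ((k : ℝ) ^ 2 + u ^ 2) / 2 + 5 * (k : ℝ) ^ 2 / ((k : ℝ) ^ 2 + u ^ 2) := by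
  have hK : (1 : ℝ) ≤ (k : ℝ) ^ 2 := by
    rw [one_le_sq_iff_one_le_abs, ← Int.cast_abs]
    exact_mod_cast hk
  have hcross := abs_mul_div_sq_add_sq_le_half (k : ℝ) u
  have hweight : ((1 + u ^ 2 / (k : ℝ) ^ 2) / 8)
      * (1 - ((k : ℝ) ^ 2 / ((k : ℝ) ^ 2 + u ^ 2)) ^ 2) ≤ u ^ 2 / 4 := by
    rw [div_mul_eq_mul_div, div_le_iff₀ (by norm_num)]
    linarith [one_add_div_mul_one_sub_div_sq_le (zero_lt_one.trans_le hK) u,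
      div_le_self (sq_nonneg u) hK]
  have hdamp : 0 ≤ 5 * (k : ℝ) ^ 2 / ((k : ℝ) ^ 2 + u ^ 2) := by positivity
  linarith [sq_nonneg u]
end

section
/- For all real numbers t ≥ 0, η, ξ and all k, l ∈ ℤ with k ≠ l, one has |η·l − k·ξ| / (|k−l| + |η − ξ − (k−l)·t|) ≤ |l| + |ξ| + t·|l|/(1 + |(η−ξ)/(k−l) − t|). -/
/-!
Write `d = k − l`. The exact decomposition `η l − k ξ = l (η − ξ − d t) + d (l t − ξ)` gives
`|η l − k ξ| ≤ |l| A + |d| (t |l| + |ξ|)` with `A = |η − ξ − d t|`. Dividing by `|d| + A`, the part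
`|l| A + |d| |ξ|` contributes at most `|l| + |ξ|`, and the part `t |l| |d|` contributes
`t |l| / (1 + A / |d|)`, which is the last term since `A / |d| = |(η − ξ)/d − t|`.
-/

theorem abs_mul_sub_mul_le {t : ℝ} (ht : 0 ≤ t) (η ξ k l : ℝ) :
    |η * l - k * ξ| ≤ |l| * |η - ξ - (k - l) * t| + |k - l| * (t * |l| + |ξ|) := by
  have decomp : η * l - k * ξ = l * (η - ξ - (k - l) * t) + (k - l) * (l * t - ξ) := by ring
  calc |η * l - k * ξ|
      ≤ |l * (η - ξ - (k - l) * t)| + |(k - l) * (l * t - ξ)| := decomp ▸ abs_add_le _ _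
    _ ≤ |l| * |η - ξ - (k - l) * t| + |k - l| * (t * |l| + |ξ|) := by
      rw [abs_mul, abs_mul]
      gcongr
      calc |l * t - ξ| ≤ |l * t| + |ξ| := abs_sub _ _
        _ = t * |l| + |ξ| := by rw [abs_mul, abs_of_nonneg ht, mul_comm]

theorem div_add_le_add_add_div {X L c s D A : ℝ} (hD : 0 < D) (hA : 0 ≤ A) (hL : 0 ≤ L)
    (hc : 0 ≤ c) (hX : X ≤ L * A + D * (s + c)) :
    X / (D + A) ≤ L + c + s / (1 + A / D) := by
  have hDA : 0 < D + A := by linarith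
  have hs : s / (1 + A / D) = s * D / (D + A) := by field_simp
  rw [hs, div_le_iff₀ hDA, add_mul, div_mul_cancel₀ _ hDA.ne']
  nlinarith [mul_nonneg hL hD.le, mul_nonneg hc hA]

theorem abs_div_sub_eq {d : ℝ} (hd : d ≠ 0) (u t : ℝ) : |u / d - t| = |u - d * t| / |d| := by
  rw [← abs_div, sub_div, mul_div_cancel_left₀ _ hd]

/-- Frequency inequality used in the reaction estimate `R_{G→φ}^{NR}`: for `t ≥ 0` and
`k ≠ l`, `|η l − k ξ|/(|k−l| + |η − ξ − (k−l)t|) ≤ |l| + |ξ| + t|l|/(1+|(η−ξ)/(k−l) − t|)`. -/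
theorem reaction_symbol_le (t : ℝ) (ht : 0 ≤ t) (η ξ : ℝ) (k l : ℤ) (hkl : k ≠ l) :
    |η * (l : ℝ) - (k : ℝ) * ξ| / (|(k : ℝ) - (l : ℝ)| + |η - ξ - ((k : ℝ) - (l : ℝ)) * t|) ≤
      |(l : ℝ)| + |ξ| + t * |(l : ℝ)| / (1 + |(η - ξ) / ((k : ℝ) - (l : ℝ)) - t|) := by
  have hd : (k : ℝ) - l ≠ 0 := sub_ne_zero.2 (Int.cast_injective.ne hkl)
  rw [abs_div_sub_eq hd]
  exact div_add_le_add_add_div (abs_pos.2 hd) (abs_nonneg _) (abs_nonneg _) (abs_nonneg _)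
    (abs_mul_sub_mul_le ht η ξ k l)
end

section
/- There exists a constant C > 0 such that for all k ∈ ℤ with k ≠ 0 and all η ∈ ℝ, ∫_0^∞ ∑_{j ∈ ℤ, j ≠ 0} ( (2·|η/j − τ|/|j|) / ((1+(η/j − τ)²)²·(1+(k−j)²)^{3/2}) ) dτ ≤ C/|k|. -/
open MeasureTheory

open Set Filter Topology

lemma M1h_int : Integrable (fun x : ℝ => 2 * |x| / (1 + x ^ 2) ^ 2) := by
  refine integrable_inv_one_add_sq.mono' ?_ ?_
  · exact (Continuous.div (by continuity) (by continuity)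
      (fun x => by positivity)).aestronglyMeasurable
  · filter_upwards with x
    rw [Real.norm_eq_abs, abs_of_nonneg (by positivity)]
    have h1 : 2 * |x| ≤ 1 + x ^ 2 := by nlinarith [sq_abs x, sq_nonneg (|x| - 1)]
    have h2 : (1 + x ^ 2)⁻¹ * (1 + x ^ 2) ^ 2 = 1 + x ^ 2 := by field_simp
    rw [div_le_iff₀ (by positivity), h2]
    exact h1

lemma M1h_Ioi : ∫ x in Set.Ioi (0 : ℝ), 2 * x / (1 + x ^ 2) ^ 2 = 1 := by
  have hderiv : ∀ x ∈ Ici (0:ℝ), HasDerivAt (fun x : ℝ => -(1 + x ^ 2)⁻¹)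
      (2 * x / (1 + x ^ 2) ^ 2) x := by
    intro x _
    have hd : HasDerivAt (fun x : ℝ => 1 + x ^ 2) (2 * x) x := by
      simpa using (hasDerivAt_pow 2 x).const_add 1
    have := (hd.inv (by positivity)).neg
    convert this using 1
    · rfl
    · rfl
    · rfl
    · ring
  have hint : IntegrableOn (fun x : ℝ => 2 * x / (1 + x ^ 2) ^ 2) (Ioi 0) := by
    refine (M1h_int.integrableOn).congr_fun ?_ measurableSet_Ioi
    intro x hx
    simp only []
    rw [abs_of_nonneg (le_of_lt hx)]
  have htend : Tendsto (fun x : ℝ => -(1 + x ^ 2)⁻¹) atTop (𝓝 0) := by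
    have h1 : Tendsto (fun x : ℝ => 1 + x ^ 2) atTop atTop :=
      tendsto_atTop_add_const_left _ 1 (tendsto_pow_atTop (by norm_num))
    have := h1.inv_tendsto_atTop
    rw [show (0:ℝ) = -0 by norm_num]
    exact this.neg
  have := integral_Ioi_of_hasDerivAt_of_tendsto' hderiv hint htend
  rw [this]; norm_num

lemma M1h_total : ∫ x : ℝ, 2 * |x| / (1 + x ^ 2) ^ 2 = 2 := by
  have h : (fun x : ℝ => 2 * |x| / (1 + x ^ 2) ^ 2)
      = fun x : ℝ => (fun y : ℝ => 2 * y / (1 + y ^ 2) ^ 2) |x| := by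
    funext x; simp [sq_abs]
  rw [h, integral_comp_abs (f := fun y : ℝ => 2 * y / (1 + y ^ 2) ^ 2), M1h_Ioi]
  norm_num

lemma M1h_trans_int (a : ℝ) : Integrable (fun τ : ℝ => 2 * |a - τ| / (1 + (a - τ) ^ 2) ^ 2) :=
  M1h_int.comp_sub_left a

lemma M1h_trans_bound (a : ℝ) :
    ∫ τ in Set.Ioi (0 : ℝ), 2 * |a - τ| / (1 + (a - τ) ^ 2) ^ 2 ≤ 2 := by
  calc ∫ τ in Set.Ioi (0 : ℝ), 2 * |a - τ| / (1 + (a - τ) ^ 2) ^ 2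
      ≤ ∫ τ : ℝ, 2 * |a - τ| / (1 + (a - τ) ^ 2) ^ 2 :=
        setIntegral_le_integral (M1h_trans_int a) (by filter_upwards with τ; positivity)
    _ = ∫ x : ℝ, 2 * |x| / (1 + x ^ 2) ^ 2 :=
        integral_sub_left_eq_self (fun x : ℝ => 2 * |x| / (1 + x ^ 2) ^ 2) volume a
    _ = 2 := M1h_total

lemma M1f_summable : Summable (fun n : ℤ => 1 / (1 + (n : ℝ) ^ 2)) := by
  have hsq : Summable (fun n : ℤ => 1 / (n : ℝ) ^ 2) := Real.summable_one_div_int_pow.mpr one_lt_two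
  have hind : Summable (Set.indicator ({0} : Set ℤ) (fun _ => (1:ℝ))) := by
    apply summable_of_ne_finset_zero (s := {(0:ℤ)})
    intro b hb
    simp only [Finset.mem_singleton] at hb
    simp [Set.indicator_of_notMem, hb]
  refine Summable.of_nonneg_of_le (fun n => by positivity) (fun n => ?_) (hsq.add hind)
  by_cases hn : n = 0
  · subst hn; simp
  · have h1 : (1:ℝ) ≤ (n:ℝ)^2 := by
      have h2 : (1:ℝ) ≤ |(n:ℝ)| := by exact_mod_cast Int.one_le_abs hn
      nlinarith [sq_abs (n:ℝ)]
    rw [Set.indicator_of_notMem (by simpa using hn)]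
    have : 1 / (1 + (n:ℝ)^2) ≤ 1 / (n:ℝ)^2 := by
      apply one_div_le_one_div_of_le (by nlinarith) (by nlinarith)
    linarith

/-- Bound on the term `M₁` from the proof of Lemma 4.4 iv): the time integral over
`(0,∞)` of the sum over shear frequencies `j ≠ 0` of the `η`-derivatives of the
Lorentzian factors `1/((1+(η/j−τ)²)·⟨k−j⟩³)`, with `⟨x⟩³ = (1+x²)^{3/2}`, is of
order `1/|k|`. -/
theorem M1_estimate : ∃ C : ℝ, 0 < C ∧ ∀ k : ℤ, k ≠ 0 → ∀ η : ℝ,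
    (∫ τ in Set.Ioi (0 : ℝ), ∑' j : {j : ℤ // j ≠ 0},
      (2 * |η / (j.1 : ℝ) - τ| / |(j.1 : ℝ)|) /
        ((1 + (η / (j.1 : ℝ) - τ) ^ 2) ^ 2 * (1 + ((k : ℝ) - (j.1 : ℝ)) ^ 2) ^ ((3 : ℝ) / 2)))
      ≤ C / |(k : ℝ)| := by
  set f : ℤ → ℝ := fun n => 1 / (1 + (n : ℝ) ^ 2) with hf_def
  have hfnn : ∀ n, 0 ≤ f n := fun n => by positivity
  set S : ℝ := ∑' n : ℤ, f n with hS_def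
  have hSpos : 0 < S := Summable.tsum_pos M1f_summable (fun n => hfnn n) 0 (by norm_num [hf_def])
  refine ⟨4 * S, by positivity, ?_⟩
  intro k hk η
  have hkpos : 0 < |(k : ℝ)| := by
    simp only [abs_pos]
    exact_mod_cast hk
  set F : {j : ℤ // j ≠ 0} → ℝ → ℝ := fun j τ =>
    (2 * |η / (j.1 : ℝ) - τ| / |(j.1 : ℝ)|) /
      ((1 + (η / (j.1 : ℝ) - τ) ^ 2) ^ 2 * (1 + ((k : ℝ) - (j.1 : ℝ)) ^ 2) ^ ((3 : ℝ) / 2))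
    with hF_def
  have hFnonneg : ∀ j τ, 0 ≤ F j τ := fun j τ => by positivity
  -- rewrite of F j as translate * const
  have hFeq : ∀ j : {j : ℤ // j ≠ 0}, F j = fun τ =>
      (2 * |η / (j.1 : ℝ) - τ| / (1 + (η / (j.1 : ℝ) - τ) ^ 2) ^ 2) *
        (|(j.1 : ℝ)| * (1 + ((k : ℝ) - (j.1 : ℝ)) ^ 2) ^ ((3 : ℝ) / 2))⁻¹ := by
    intro j; funext τ
    simp only [hF_def]
    field_simp
  have hFint : ∀ j, Integrable (F j) (volume.restrict (Set.Ioi (0:ℝ))) := by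
    intro j
    rw [hFeq j]
    exact ((M1h_trans_int (η / (j.1 : ℝ))).restrict).mul_const _
  -- per-j integral bound
  have hc_nonneg : ∀ j : {j : ℤ // j ≠ 0},
      (0:ℝ) ≤ (|(j.1 : ℝ)| * (1 + ((k : ℝ) - (j.1 : ℝ)) ^ 2) ^ ((3 : ℝ) / 2))⁻¹ :=
    fun j => by positivity
  have hint_le : ∀ j : {j : ℤ // j ≠ 0}, ∫ τ in Set.Ioi (0:ℝ), F j τ ≤
      2 * (|(j.1 : ℝ)| * (1 + ((k : ℝ) - (j.1 : ℝ)) ^ 2) ^ ((3 : ℝ) / 2))⁻¹ := by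
    intro j
    rw [hFeq j, integral_mul_const]
    exact mul_le_mul_of_nonneg_right (M1h_trans_bound _) (hc_nonneg j)
  -- pointwise term bound
  have hterm : ∀ j : {j : ℤ // j ≠ 0},
      2 * (|(j.1 : ℝ)| * (1 + ((k : ℝ) - (j.1 : ℝ)) ^ 2) ^ ((3 : ℝ) / 2))⁻¹ ≤
        4 / |(k : ℝ)| * f (k - j.1) := by
    intro j
    set x : ℝ := (k : ℝ) - (j.1 : ℝ) with hx_def
    set s : ℝ := Real.sqrt (1 + x ^ 2) with hs_def
    have hs2 : s ^ 2 = 1 + x ^ 2 := Real.sq_sqrt (by positivity)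
    have hs0 : 0 < s := Real.sqrt_pos.mpr (by positivity)
    have hrpow : (1 + x ^ 2) ^ ((3 : ℝ) / 2) = s ^ 3 := by
      rw [hs_def, Real.sqrt_eq_rpow, ← Real.rpow_natCast ((1 + x ^ 2) ^ ((1:ℝ)/2)) 3,
        ← Real.rpow_mul (by positivity)]
      norm_num
    have hj1 : (1:ℝ) ≤ |(j.1 : ℝ)| := by exact_mod_cast Int.one_le_abs j.2
    have hkle : |(k : ℝ)| ≤ |(j.1 : ℝ)| + |x| := by
      have h1 : (k : ℝ) = (j.1 : ℝ) + x := by rw [hx_def]; ring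
      rw [h1]; exact abs_add_le _ _
    have h2s : 1 + |x| ≤ 2 * s := by
      nlinarith [sq_abs x, abs_nonneg x, hs0.le, hs2, sq_nonneg (|x| - 1)]
    have hkey : |(k : ℝ)| ≤ 2 * |(j.1 : ℝ)| * s := by nlinarith [abs_nonneg x]
    have hfx : f (k - j.1) = 1 / s ^ 2 := by
      rw [hf_def]
      simp only []
      rw [hs2]
      push_cast
      rw [hx_def]
    rw [hfx, hrpow, ← div_eq_mul_inv, div_mul_div_comm,
      div_le_div_iff₀ (by positivity) (by positivity)]
    nlinarith [mul_le_mul_of_nonneg_right hkey (sq_nonneg s), hs0.le, sq_nonneg s]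
  -- summability of the bounding series
  have hinj : Function.Injective (fun j : {j : ℤ // j ≠ 0} => k - j.1) := by
    intro a b hab
    simp only [sub_right_inj] at hab
    exact Subtype.ext hab
  have hsumf : Summable (fun j : {j : ℤ // j ≠ 0} => f (k - j.1)) :=
    M1f_summable.comp_injective hinj
  have hsumB : Summable (fun j : {j : ℤ // j ≠ 0} => 4 / |(k : ℝ)| * f (k - j.1)) :=
    hsumf.mul_left _
  have hsumI : Summable (fun j : {j : ℤ // j ≠ 0} => ∫ τ in Set.Ioi (0:ℝ), F j τ) := by
    refine Summable.of_nonneg_of_le (fun j => integral_nonneg (hFnonneg j)) (fun j => ?_) hsumB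
    exact (hint_le j).trans (hterm j)
  -- interchange integral and sum
  have hlint : ∀ j : {j : ℤ // j ≠ 0}, ∫⁻ τ in Set.Ioi (0:ℝ), ‖F j τ‖₊ =
      ENNReal.ofReal (∫ τ in Set.Ioi (0:ℝ), F j τ) := by
    intro j
    rw [ofReal_integral_eq_lintegral_ofReal (hFint j)
      (by filter_upwards with τ; exact hFnonneg j τ)]
    refine lintegral_congr fun τ => ?_
    rw [← enorm_eq_nnnorm, ← ofReal_norm_eq_enorm, Real.norm_eq_abs, abs_of_nonneg (hFnonneg j τ)]
  have hf' : ∑' j : {j : ℤ // j ≠ 0}, ∫⁻ τ in Set.Ioi (0:ℝ), ‖F j τ‖₊ ≠ ⊤ := by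
    have hle : ∑' j : {j : ℤ // j ≠ 0}, ∫⁻ τ in Set.Ioi (0:ℝ), ‖F j τ‖₊ ≤
        ∑' j : {j : ℤ // j ≠ 0}, ENNReal.ofReal (4 / |(k : ℝ)| * f (k - j.1)) := by
      refine ENNReal.tsum_le_tsum fun j => ?_
      rw [hlint j]
      exact ENNReal.ofReal_le_ofReal ((hint_le j).trans (hterm j))
    refine ne_top_of_le_ne_top ?_ hle
    rw [← ENNReal.ofReal_tsum_of_nonneg (fun j => by positivity) hsumB]
    exact ENNReal.ofReal_ne_top
  have hswap : (∫ τ in Set.Ioi (0:ℝ), ∑' j : {j : ℤ // j ≠ 0}, F j τ) =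
      ∑' j : {j : ℤ // j ≠ 0}, ∫ τ in Set.Ioi (0:ℝ), F j τ :=
    integral_tsum (fun j => (hFint j).aestronglyMeasurable) hf'
  calc (∫ τ in Set.Ioi (0:ℝ), ∑' j : {j : ℤ // j ≠ 0}, F j τ)
      = ∑' j : {j : ℤ // j ≠ 0}, ∫ τ in Set.Ioi (0:ℝ), F j τ := hswap
    _ ≤ ∑' j : {j : ℤ // j ≠ 0}, 4 / |(k : ℝ)| * f (k - j.1) :=
        Summable.tsum_le_tsum (fun j => (hint_le j).trans (hterm j)) hsumI hsumB
    _ = 4 / |(k : ℝ)| * ∑' j : {j : ℤ // j ≠ 0}, f (k - j.1) := tsum_mul_left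
    _ ≤ 4 / |(k : ℝ)| * S := by
        refine mul_le_mul_of_nonneg_left ?_ (by positivity)
        exact Summable.tsum_le_tsum_of_inj _ hinj (fun c _ => hfnn c) (fun j => le_rfl) hsumf M1f_summable
    _ = 4 * S / |(k : ℝ)| := by ring
end
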